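/- arXiv:2301.04929 — 3 statements merged into one kernel-verified Lean document; each statement's English description precedes it below -/
import Mathlib

section
/- If a population network game is weighted zero-sum, then for every β > 0 it has exactly one quantal response equilibrium. -/
/-!
Write `π_i(z, x)` for the entropy-perturbed payoff `pPay`, `⟪·,·⟫_ω` for the weighted form
`∑ i, ω i * ∑ j ~ i, x_iᵀ A_{ij} y_j` and `H(x) = ∑ i, ω i * v_β(x i)` for the weighted entropy, and
consider the gain `g(x, y) = ⟪y, x⟫_ω + H(y) - H(x)`. For `x ∈ Δ` the zero-sum condition
`⟪x, x⟫_ω = 0` turns `g(x, y)` into `∑ i, ω i * (π_i(y_i, x) - π_i(x_i, x))`, and polarising it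
gives `g(x, y) + g(y, x) = 0` on `Δ`. By Gibbs' variational principle `BR_i(x)` is the unique
maximiser of `π_i(·, x)` on `Δ_i`.

Since `g` is convex in `x` and concave in `y`, Sion's minimax theorem yields a saddle point
`(a, b)`, so `g(a, y) ≤ g(b, b) = 0` for all `y`; at `y = BR(a)` this forces `a = BR(a)`.
Two distinct equilibria `x ≠ y` would give `g(x, y) < 0` and `g(y, x) < 0`, contradicting
antisymmetry.
-/

open Real Filter

/-- Membership in the standard probability simplex on a finite set `S`. -/
def inSimplex {S : Type*} [Fintype S] (x : S → ℝ) : Prop :=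
  (∀ s, 0 ≤ x s) ∧ ∑ s, x s = 1

/-- Membership in the product of simplices `Δ = ∏ i, Δ_i`. -/
def inProd {V : Type*} [Fintype V] {S : V → Type*} [∀ i, Fintype (S i)]
    (μ : ∀ i, S i → ℝ) : Prop :=
  ∀ i, inSimplex (μ i)

/-- Payoff to population `i` of pure strategy `s` given beliefs `μ`. -/
def payoffTo {V : Type*} [Fintype V] {S : V → Type*} [∀ i, Fintype (S i)]
    (E : V → V → Prop) [DecidableRel E] (A : ∀ i j, S i → S j → ℝ)
    (μ : ∀ i, S i → ℝ) (i : V) (s : S i) : ℝ :=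
  ∑ j, if E i j then ∑ s' : S j, A i j s s' * μ j s' else 0

/-- Logit best response of population `i` to beliefs `μ`, rationality `β`. -/
noncomputable def BR {V : Type*} [Fintype V] {S : V → Type*} [∀ i, Fintype (S i)]
    (E : V → V → Prop) [DecidableRel E] (A : ∀ i j, S i → S j → ℝ) (β : ℝ)
    (μ : ∀ i, S i → ℝ) (i : V) (s : S i) : ℝ :=
  Real.exp (β * payoffTo E A μ i s) / ∑ s' : S i, Real.exp (β * payoffTo E A μ i s')

/-- Quantal response equilibrium. -/
def isQRE {V : Type*} [Fintype V] {S : V → Type*} [∀ i, Fintype (S i)]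
    (E : V → V → Prop) [DecidableRel E] (A : ∀ i j, S i → S j → ℝ) (β : ℝ)
    (x : ∀ i, S i → ℝ) : Prop :=
  inProd x ∧ ∀ i, x i = BR E A β x i

/-- The bilinear form `x_iᵀ A_{ij} y_j`. -/
def bilin {V : Type*} {S : V → Type*} [∀ i, Fintype (S i)]
    (A : ∀ i j, S i → S j → ℝ) (x y : ∀ i, S i → ℝ) (i j : V) : ℝ :=
  ∑ s : S i, ∑ s' : S j, x i s * A i j s s' * y j s'

/-- The game is weighted zero-sum with weights `ω`. -/
def weightedZeroSum {V : Type*} [Fintype V] {S : V → Type*} [∀ i, Fintype (S i)]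
    (E : V → V → Prop) [DecidableRel E] (A : ∀ i j, S i → S j → ℝ)
    (ω : V → ℝ) : Prop :=
  ∀ x, inProd x → ∑ i, ω i * ∑ j, (if E i j then bilin A x x i j else 0) = 0

/-- Entropy perturbation `v_β(x) = -(1/β) Σ_s x s · ln (x s)` (`Real.log 0 = 0`). -/
noncomputable def vEnt {S : Type*} [Fintype S] (β : ℝ) (x : S → ℝ) : ℝ :=
  -(1 / β) * ∑ s, x s * Real.log (x s)

/-- Perturbed payoff `π_i(x_i, μ)`. -/
noncomputable def pPay {V : Type*} [Fintype V] {S : V → Type*} [∀ i, Fintype (S i)]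
    (E : V → V → Prop) [DecidableRel E] (A : ∀ i j, S i → S j → ℝ) (β : ℝ)
    (μ : ∀ i, S i → ℝ) (i : V) (xi : S i → ℝ) : ℝ :=
  (∑ j, if E i j then ∑ s : S i, ∑ s' : S j, xi s * A i j s s' * μ j s' else 0)
    + vEnt β xi

/-- Second partial derivative of `μ ↦ BR_i(μ)(s)` (on the ambient space) in the
coordinate `(j, s')`, evaluated at `μ`. -/
noncomputable def secondPartialBR {V : Type*} [Fintype V] [DecidableEq V]
    {S : V → Type*} [∀ i, Fintype (S i)] [∀ i, DecidableEq (S i)]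
    (E : V → V → Prop) [DecidableRel E] (A : ∀ i j, S i → S j → ℝ) (β : ℝ)
    (μ : ∀ i, S i → ℝ) (i : V) (s : S i) (j : V) (s' : S j) : ℝ :=
  iteratedDeriv 2 (fun r : ℝ =>
    BR E A β (fun k => μ k + r • Pi.single (M := fun k => S k → ℝ) j (Pi.single s' (1 : ℝ)) k) i s) 0

/-- The `(i,s)`-component of the time-reparameterized mean-belief vector field of an
initially heterogeneous system with initial belief variances `σ2`. -/
noncomputable def heteroField {V : Type*} [Fintype V] [DecidableEq V]
    {S : V → Type*} [∀ i, Fintype (S i)] [∀ i, DecidableEq (S i)]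
    (E : V → V → Prop) [DecidableRel E] (A : ∀ i j, S i → S j → ℝ) (β : ℝ)
    (σ2 : ∀ j, S j → ℝ) (τ : ℝ) (μ : ∀ i, S i → ℝ) (i : V) (s : S i) : ℝ :=
  BR E A β μ i s - μ i s + (1 / 2) * Real.exp (-2 * τ) *
    ∑ j, if E i j then
      ∑ s' : S j, σ2 j s' * secondPartialBR E A β μ i s j s' else 0

lemma concaveOn_sum {E ι : Type*} [AddCommMonoid E] [Module ℝ E] {s : Set E} (hs : Convex ℝ s)
    (t : Finset ι) {f : ι → E → ℝ} (hf : ∀ i ∈ t, ConcaveOn ℝ s (f i)) :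
    ConcaveOn ℝ s fun x => ∑ i ∈ t, f i x := by
  classical
  induction t using Finset.induction_on with
  | empty => simpa using concaveOn_const 0 hs
  | insert i t hi ih =>
    simp only [Finset.sum_insert hi]
    exact (hf i (Finset.mem_insert_self i t)).add
      (ih fun j hj => hf j (Finset.mem_insert_of_mem hj))

noncomputable def softmax {S : Type*} [Fintype S] (u : S → ℝ) (s : S) : ℝ :=
  exp (u s) / ∑ t, exp (u t)

section Gibbs

variable {S : Type*} [Fintype S]

lemma softmax_pos [Nonempty S] (u : S → ℝ) (s : S) : 0 < softmax u s :=
  div_pos (exp_pos _) (Finset.sum_pos (fun _ _ => exp_pos _) Finset.univ_nonempty)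

lemma sum_softmax [Nonempty S] (u : S → ℝ) : ∑ s, softmax u s = 1 := by
  simp only [softmax, ← Finset.sum_div]
  exact div_self (Finset.sum_pos (fun _ _ => exp_pos _) Finset.univ_nonempty).ne'

lemma softmax_inSimplex [Nonempty S] (u : S → ℝ) : inSimplex (softmax u) :=
  ⟨fun s => (softmax_pos u s).le, sum_softmax u⟩

lemma sub_le_mul_log_div {a b : ℝ} (ha : 0 ≤ a) (hb : 0 < b) : a - b ≤ a * log (a / b) := by
  have h := mul_le_mul_of_nonneg_left (self_sub_one_le_mul_log (div_nonneg ha hb.le)) hb.le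
  calc a - b = b * (a / b - 1) := by field_simp
    _ ≤ b * (a / b * log (a / b)) := h
    _ = a * log (a / b) := by field_simp

lemma sub_lt_mul_log_div {a b : ℝ} (ha : 0 ≤ a) (hb : 0 < b) (hab : a ≠ b) :
    a - b < a * log (a / b) := by
  have hne : a / b ≠ 1 := fun h => hab (by field_simp at h; linarith)
  have h := mul_lt_mul_of_pos_left (self_sub_one_lt_mul_log (div_nonneg ha hb.le) hne) hb
  calc a - b = b * (a / b - 1) := by field_simp
    _ < b * (a / b * log (a / b)) := h
    _ = a * log (a / b) := by field_simp

lemma sum_mul_log_div_pos {z p : S → ℝ} (hz : inSimplex z) (hp : ∀ s, 0 < p s)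
    (hp1 : ∑ s, p s = 1) (hne : z ≠ p) : 0 < ∑ s, z s * log (z s / p s) := by
  obtain ⟨s₀, hs₀⟩ := Function.ne_iff.mp hne
  calc (0 : ℝ) = ∑ s, (z s - p s) := by rw [Finset.sum_sub_distrib, hz.2, hp1, sub_self]
    _ < ∑ s, z s * log (z s / p s) :=
      Finset.sum_lt_sum (fun s _ => sub_le_mul_log_div (hz.1 s) (hp s))
        ⟨s₀, Finset.mem_univ _, sub_lt_mul_log_div (hz.1 s₀) (hp s₀) hs₀⟩

/-- The gap between the two sides is the relative entropy of `z` with respect to `softmax u`. -/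
lemma sum_mul_sub_mul_log_lt_softmax [Nonempty S] (u : S → ℝ) {z : S → ℝ} (hz : inSimplex z)
    (hne : z ≠ softmax u) :
    ∑ s, z s * u s - ∑ s, z s * log (z s) <
      ∑ s, softmax u s * u s - ∑ s, softmax u s * log (softmax u s) := by
  set Z := ∑ t, exp (u t)
  have hZ : 0 < Z := Finset.sum_pos (fun _ _ => exp_pos _) Finset.univ_nonempty
  have hlog : ∀ s, log (softmax u s) = u s - log Z := fun s => by
    rw [softmax, log_div (exp_pos _).ne' hZ.ne', log_exp]
  have hterm : ∀ s, z s * log (z s / softmax u s) = z s * log (z s) - z s * u s + z s * log Z :=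
    fun s => by
      rcases (hz.1 s).eq_or_lt with h | h
      · simp [← h]
      · rw [log_div h.ne' (softmax_pos u s).ne', hlog]; ring
  have hgap := sum_mul_log_div_pos hz (softmax_pos u) (sum_softmax u) hne
  simp only [hterm, Finset.sum_add_distrib, Finset.sum_sub_distrib, ← Finset.sum_mul, hz.2]
    at hgap
  have hp : ∑ s, softmax u s * log (softmax u s) = ∑ s, softmax u s * u s - log Z := by
    simp only [hlog, mul_sub, Finset.sum_sub_distrib, ← Finset.sum_mul, sum_softmax, one_mul]
  linarith

end Gibbs

section Game

variable {V : Type*} [Fintype V] {S : V → Type*} [∀ i, Fintype (S i)]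
  (E : V → V → Prop) [DecidableRel E] (A : ∀ i j, S i → S j → ℝ) (β : ℝ) (ω : V → ℝ)

lemma BR_eq_softmax (μ : ∀ i, S i → ℝ) (i : V) :
    BR E A β μ i = softmax fun s => β * payoffTo E A μ i s := rfl

lemma pPay_eq (hβ : 0 < β) (μ : ∀ i, S i → ℝ) (i : V) (z : S i → ℝ) :
    pPay E A β μ i z =
      (∑ s, z s * (β * payoffTo E A μ i s) - ∑ s, z s * log (z s)) / β := by
  have hpay : ∑ j, (if E i j then ∑ s, ∑ s', z s * A i j s s' * μ j s' else 0) =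
      ∑ s, z s * payoffTo E A μ i s := by
    simp only [payoffTo, Finset.mul_sum, mul_ite, mul_zero, mul_assoc]
    rw [Finset.sum_comm]
    exact Finset.sum_congr rfl fun j _ => by split_ifs <;> simp
  rw [pPay, vEnt, hpay]
  simp only [mul_left_comm _ β, ← Finset.mul_sum]
  field_simp
  ring

variable [∀ i, Nonempty (S i)]

lemma BR_inSimplex (μ : ∀ i, S i → ℝ) (i : V) : inSimplex (BR E A β μ i) :=
  softmax_inSimplex _

lemma pPay_lt_pPay_BR (hβ : 0 < β) {μ : ∀ i, S i → ℝ} {i : V} {z : S i → ℝ}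
    (hz : inSimplex z) (hne : z ≠ BR E A β μ i) :
    pPay E A β μ i z < pPay E A β μ i (BR E A β μ i) := by
  rw [pPay_eq E A β hβ, pPay_eq E A β hβ, BR_eq_softmax]
  exact div_lt_div_of_pos_right (sum_mul_sub_mul_log_lt_softmax _ hz hne) hβ

lemma pPay_le_pPay_BR (hβ : 0 < β) {μ : ∀ i, S i → ℝ} {i : V} {z : S i → ℝ}
    (hz : inSimplex z) : pPay E A β μ i z ≤ pPay E A β μ i (BR E A β μ i) := by
  rcases eq_or_ne z (BR E A β μ i) with rfl | hne
  · exact le_rfl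
  · exact (pPay_lt_pPay_BR E A β hβ hz hne).le

lemma sum_pPay_lt_sum_pPay_BR (hβ : 0 < β) (hω : ∀ i, 0 < ω i) {μ z : ∀ i, S i → ℝ}
    (hz : inProd z) (hne : z ≠ BR E A β μ) :
    ∑ i, ω i * pPay E A β μ i (z i) < ∑ i, ω i * pPay E A β μ i (BR E A β μ i) := by
  obtain ⟨i₀, hi₀⟩ := Function.ne_iff.mp hne
  exact Finset.sum_lt_sum
    (fun i _ => mul_le_mul_of_nonneg_left (pPay_le_pPay_BR E A β hβ (hz i)) (hω i).le)
    ⟨i₀, Finset.mem_univ _,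
      mul_lt_mul_of_pos_left (pPay_lt_pPay_BR E A β hβ (hz i₀) hi₀) (hω i₀)⟩

end Game

section Profiles

variable {V : Type*} [Fintype V] {S : V → Type*} [∀ i, Fintype (S i)]

lemma setOf_inProd_eq :
    {x : ∀ i, S i → ℝ | inProd x} = Set.univ.pi fun i => stdSimplex ℝ (S i) := by
  ext x
  simp [inProd, inSimplex, stdSimplex]

lemma convex_setOf_inProd : Convex ℝ {x : ∀ i, S i → ℝ | inProd x} :=
  (setOf_inProd_eq (S := S)) ▸ convex_pi fun i _ => convex_stdSimplex ℝ (S i)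

lemma isCompact_setOf_inProd : IsCompact {x : ∀ i, S i → ℝ | inProd x} :=
  (setOf_inProd_eq (S := S)) ▸ isCompact_univ_pi fun i => isCompact_stdSimplex ℝ (S i)

end Profiles

section ZeroSum

variable {V : Type*} [Fintype V] {S : V → Type*} [∀ i, Fintype (S i)]
  (E : V → V → Prop) [DecidableRel E] (A : ∀ i j, S i → S j → ℝ) (ω : V → ℝ)

noncomputable def weightedForm : LinearMap.BilinForm ℝ (∀ i, S i → ℝ) :=
  LinearMap.mk₂ ℝ (fun x y => ∑ i, ω i * ∑ j, if E i j then bilin A x y i j else 0)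
    (fun x x' y => by
      simp only [bilin, Pi.add_apply, add_mul, Finset.sum_add_distrib, ite_add_zero, mul_add])
    (fun c x y => by
      simp only [bilin, Pi.smul_apply, smul_eq_mul, mul_assoc, ← Finset.mul_sum, ← mul_ite_zero,
        mul_left_comm _ c])
    (fun x y y' => by
      simp only [bilin, Pi.add_apply, mul_add, Finset.sum_add_distrib, ite_add_zero])
    (fun c x y => by
      simp only [bilin, Pi.smul_apply, smul_eq_mul, mul_left_comm _ c, ← Finset.mul_sum,
        ← mul_ite_zero])

lemma weightedForm_apply (x y : ∀ i, S i → ℝ) :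
    weightedForm E A ω x y = ∑ i, ω i * ∑ j, if E i j then bilin A x y i j else 0 := rfl

lemma weightedForm_self (hzs : weightedZeroSum E A ω) {x : ∀ i, S i → ℝ} (hx : inProd x) :
    weightedForm E A ω x x = 0 :=
  hzs x hx

/-- Polarise `weightedForm_self` at the midpoint of `x` and `y`. -/
lemma weightedForm_add_swap (hzs : weightedZeroSum E A ω) {x y : ∀ i, S i → ℝ}
    (hx : inProd x) (hy : inProd y) :
    weightedForm E A ω x y + weightedForm E A ω y x = 0 := by
  have hmid := weightedForm_self E A ω hzs
    (convex_setOf_inProd hx hy (by norm_num : (0 : ℝ) ≤ 1 / 2) (by norm_num : (0 : ℝ) ≤ 1 / 2)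
      (by norm_num))
  simp only [map_add, map_smul, LinearMap.add_apply, LinearMap.smul_apply, smul_eq_mul,
    weightedForm_self E A ω hzs hx, weightedForm_self E A ω hzs hy] at hmid
  linarith

end ZeroSum

section Entropy

variable {V : Type*} [Fintype V] {S : V → Type*} [∀ i, Fintype (S i)] (β : ℝ) (ω : V → ℝ)

noncomputable def weightedEntropy (x : ∀ i, S i → ℝ) : ℝ :=
  ∑ i, ω i * vEnt β (x i)

lemma weightedEntropy_eq_sum_negMulLog (x : ∀ i, S i → ℝ) :
    weightedEntropy β ω x = ∑ i, ∑ s, ω i / β * negMulLog (x i s) := by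
  simp only [weightedEntropy, vEnt, negMulLog, Finset.mul_sum]
  refine Finset.sum_congr rfl fun i _ => Finset.sum_congr rfl fun s _ => ?_
  ring

lemma continuous_weightedEntropy : Continuous (weightedEntropy (S := S) β ω) := by
  simp only [funext (weightedEntropy_eq_sum_negMulLog β ω)]
  fun_prop

lemma concaveOn_weightedEntropy (hβ : 0 < β) (hω : ∀ i, 0 ≤ ω i) :
    ConcaveOn ℝ {x : ∀ i, S i → ℝ | inProd x} (weightedEntropy β ω) := by
  simp only [funext (weightedEntropy_eq_sum_negMulLog β ω)]
  refine concaveOn_sum convex_setOf_inProd _ fun i _ =>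
    concaveOn_sum convex_setOf_inProd _ fun s _ => ConcaveOn.smul (div_nonneg (hω i) hβ.le) ?_
  have hproj := concaveOn_negMulLog.comp_linearMap
    (LinearMap.proj (R := ℝ) (φ := fun _ : S i => ℝ) s ∘ₗ LinearMap.proj (φ := fun i => S i → ℝ) i)
  exact hproj.subset (fun x (hx : inProd x) => (hx i).1 s) convex_setOf_inProd

end Entropy

section Equilibrium

variable {V : Type*} [Fintype V] {S : V → Type*} [∀ i, Fintype (S i)]
  (E : V → V → Prop) [DecidableRel E] (A : ∀ i j, S i → S j → ℝ) (β : ℝ) (ω : V → ℝ)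

noncomputable def weightedGain (x y : ∀ i, S i → ℝ) : ℝ :=
  weightedForm E A ω y x + weightedEntropy β ω y - weightedEntropy β ω x

lemma weightedGain_eq (hzs : weightedZeroSum E A ω) {x : ∀ i, S i → ℝ} (hx : inProd x)
    (y : ∀ i, S i → ℝ) :
    weightedGain E A β ω x y =
      ∑ i, ω i * pPay E A β x i (y i) - ∑ i, ω i * pPay E A β x i (x i) := by
  have hsum : ∀ z, ∑ i, ω i * pPay E A β x i (z i) =
      weightedForm E A ω z x + weightedEntropy β ω z := fun z => by
    simp only [pPay, mul_add, Finset.sum_add_distrib, weightedForm_apply, weightedEntropy, bilin]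
  rw [hsum, hsum, weightedForm_self E A ω hzs hx, weightedGain]
  ring

lemma weightedGain_add_swap (hzs : weightedZeroSum E A ω) {x y : ∀ i, S i → ℝ}
    (hx : inProd x) (hy : inProd y) :
    weightedGain E A β ω x y + weightedGain E A β ω y x = 0 := by
  have := weightedForm_add_swap E A ω hzs hx hy
  simp only [weightedGain]
  linarith

lemma exists_forall_weightedGain_nonpos [∀ i, Nonempty (S i)] (hβ : 0 < β) (hω : ∀ i, 0 ≤ ω i)
    (hzs : weightedZeroSum E A ω) :
    ∃ a, inProd a ∧ ∀ y, inProd y → weightedGain E A β ω a y ≤ 0 := by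
  set P := {x : ∀ i, S i → ℝ | inProd x}
  have hP : P.Nonempty := ⟨fun _ => softmax 0, fun _ => softmax_inSimplex 0⟩
  have hPc : Convex ℝ P := convex_setOf_inProd
  have hPk : IsCompact P := isCompact_setOf_inProd
  have hH := concaveOn_weightedEntropy (S := S) β ω hβ hω
  have hcH := continuous_weightedEntropy (S := S) β ω
  set B := weightedForm E A ω
  obtain ⟨a, ha, b, hb, hab⟩ := Sion.exists_isSaddlePointOn (f := weightedGain E A β ω)
    hP hPc hPk
    (fun y _ => (((B y).continuous_of_finiteDimensional.add continuous_const).sub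
      hcH).continuousOn.lowerSemicontinuousOn)
    (fun y _ => ((((B y).convexOn hPc).add_const _).sub hH).quasiconvexOn)
    hPc hP hPk
    (fun x _ => (((B.flip x).continuous_of_finiteDimensional.add hcH).sub
      continuous_const).continuousOn.upperSemicontinuousOn)
    (fun x _ => ((((B.flip x).concaveOn hPc).add hH).sub
      (convexOn_const _ hPc)).quasiconcaveOn)
  refine ⟨a, ha, fun y hy => ?_⟩
  calc weightedGain E A β ω a y ≤ weightedGain E A β ω b b := hab b hb y hy
    _ = 0 := by simp [weightedGain, weightedForm_self E A ω hzs hb]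

variable [∀ i, Nonempty (S i)]

lemma weightedGain_neg_of_isQRE (hβ : 0 < β) (hω : ∀ i, 0 < ω i) (hzs : weightedZeroSum E A ω)
    {x y : ∀ i, S i → ℝ} (hx : isQRE E A β x) (hy : inProd y) (hne : y ≠ x) :
    weightedGain E A β ω x y < 0 := by
  have hBR : BR E A β x = x := funext fun i => (hx.2 i).symm
  have := sum_pPay_lt_sum_pPay_BR E A β ω hβ hω hy (hBR ▸ hne)
  rw [hBR] at this
  rw [weightedGain_eq E A β ω hzs hx.1]
  linarith

theorem exists_isQRE (hβ : 0 < β) (hω : ∀ i, 0 < ω i) (hzs : weightedZeroSum E A ω) :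
    ∃ x, isQRE E A β x := by
  obtain ⟨a, ha, hgain⟩ := exists_forall_weightedGain_nonpos E A β ω hβ (fun i => (hω i).le) hzs
  suffices a = BR E A β a from ⟨a, ha, fun i => congrFun this i⟩
  by_contra hne
  have hlt := sum_pPay_lt_sum_pPay_BR E A β ω hβ hω ha hne
  have hle := hgain _ (BR_inSimplex E A β a)
  rw [weightedGain_eq E A β ω hzs ha] at hle
  linarith

theorem isQRE.eq (hβ : 0 < β) (hω : ∀ i, 0 < ω i) (hzs : weightedZeroSum E A ω)
    {x y : ∀ i, S i → ℝ} (hx : isQRE E A β x) (hy : isQRE E A β y) : x = y := by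
  by_contra hne
  have hxy := weightedGain_neg_of_isQRE E A β ω hβ hω hzs hx hy.1 (Ne.symm hne)
  have hyx := weightedGain_neg_of_isQRE E A β ω hβ hω hzs hy hx.1 hne
  linarith [weightedGain_add_swap E A β ω hzs hx.1 hy.1]

end Equilibrium

theorem qre_unique_of_weightedZeroSum_general
    {V : Type*} [Fintype V]
    {S : V → Type*} [∀ i, Fintype (S i)] [∀ i, Nonempty (S i)]
    (E : V → V → Prop) [DecidableRel E]
    (A : ∀ i j, S i → S j → ℝ)
    (ω : V → ℝ) (hω : ∀ i, 0 < ω i) (hzs : weightedZeroSum E A ω)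
    (β : ℝ) (hβ : 0 < β) :
    ∃! x, isQRE E A β x := by
  obtain ⟨x, hx⟩ := exists_isQRE E A β ω hβ hω hzs
  exact ⟨x, hx, fun y hy => hy.eq E A β ω hβ hω hzs hx⟩

/-- a weighted zero-sum population network game has exactly one
quantal response equilibrium for every `β > 0`. -/
theorem qre_unique_of_weightedZeroSum
    {V : Type*} [Fintype V] [Nonempty V] [DecidableEq V]
    {S : V → Type*} [∀ i, Fintype (S i)] [∀ i, Nonempty (S i)] [∀ i, DecidableEq (S i)]
    (E : V → V → Prop) [DecidableRel E]
    (hE_symm : ∀ i j, E i j → E j i) (hE_irrefl : ∀ i, ¬ E i i)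
    (A : ∀ i j, S i → S j → ℝ)
    (ω : V → ℝ) (hω : ∀ i, 0 < ω i) (hzs : weightedZeroSum E A ω)
    (β : ℝ) (hβ : 0 < β) :
    ∃! x, isQRE E A β x :=
  qre_unique_of_weightedZeroSum_general E A ω hω hzs β hβ
end

section
/- Let Γ be a weighted zero-sum population network game, let β > 0, let μ* be its unique quantal response equilibrium, and let (σ²_{j,s})_{j∈V, s∈S_j} be arbitrary nonnegative constants. Then every solution μ : [0,∞) → Δ of the heterogeneous mean-belief dynamics converges to μ*: μ(τ) → μ* as τ → ∞. -/
open Real Filter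
set_option linter.unusedSectionVars false

namespace QRE

variable {V : Type*} [Fintype V] {S : V → Type*} [∀ i, Fintype (S i)]
variable (E : V → V → Prop) [DecidableRel E] (A : ∀ i j, S i → S j → ℝ) (β : ℝ)

/-- Partition function. -/
noncomputable def Z (x : ∀ i, S i → ℝ) (i : V) : ℝ :=
  ∑ s : S i, Real.exp (β * payoffTo E A x i s)

lemma Z_pos [∀ i, Nonempty (S i)] (x : ∀ i, S i → ℝ) (i : V) : 0 < Z E A β x i := by
  exact Finset.sum_pos (fun s _ => Real.exp_pos _) Finset.univ_nonempty

lemma BR_def (x : ∀ i, S i → ℝ) (i : V) (s : S i) :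
    BR E A β x i s = Real.exp (β * payoffTo E A x i s) / Z E A β x i := rfl

lemma BR_pos [∀ i, Nonempty (S i)] (x : ∀ i, S i → ℝ) (i : V) (s : S i) :
    0 < BR E A β x i s :=
  div_pos (Real.exp_pos _) (Z_pos E A β x i)

lemma BR_sum_one [∀ i, Nonempty (S i)] (x : ∀ i, S i → ℝ) (i : V) :
    ∑ s : S i, BR E A β x i s = 1 := by
  simp only [BR_def]
  rw [← Finset.sum_div]
  exact div_self (Z_pos E A β x i).ne'

lemma BR_inProd [∀ i, Nonempty (S i)] (x : ∀ i, S i → ℝ) : inProd (BR E A β x) :=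
  fun i => ⟨fun s => (BR_pos E A β x i s).le, BR_sum_one E A β x i⟩

lemma log_BR [∀ i, Nonempty (S i)] (x : ∀ i, S i → ℝ) (i : V) (s : S i) :
    Real.log (BR E A β x i s) = β * payoffTo E A x i s - Real.log (Z E A β x i) := by
  rw [BR_def, Real.log_div (Real.exp_pos _).ne' (Z_pos E A β x i).ne', Real.log_exp]

/-- The weighted "interaction" bilinear form. -/
noncomputable def Bf (ω : V → ℝ) (x y : ∀ i, S i → ℝ) : ℝ :=
  ∑ i, ω i * ∑ j, if E i j then bilin A x y i j else 0

lemma sum_mul_payoff (y x : ∀ i, S i → ℝ) (i : V) :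
    ∑ s : S i, y i s * payoffTo E A x i s = ∑ j, if E i j then bilin A y x i j else 0 := by
  simp only [payoffTo, bilin, Finset.mul_sum]
  rw [Finset.sum_comm]
  refine Finset.sum_congr rfl fun j _ => ?_
  by_cases h : E i j <;> simp [h, Finset.mul_sum, mul_assoc]

/-- The Lyapunov function. -/
noncomputable def Vfun (ω : V → ℝ) (x : ∀ i, S i → ℝ) : ℝ :=
  ∑ i, ω i * ((1 / β) * Real.log (Z E A β x i)
    - (∑ s : S i, x i s * payoffTo E A x i s) - vEnt β (x i))

/-- Gibbs-type inequality. -/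
lemma sum_log_le {T : Type*} [Fintype T] {p q : T → ℝ}
    (hp : ∀ s, 0 ≤ p s) (hq : ∀ s, 0 < q s)
    (hps : ∑ s, p s = 1) (hqs : ∑ s, q s = 1) :
    ∑ s, p s * (Real.log (q s) - Real.log (p s)) ≤ 0 := by
  have key : ∀ s, p s * (Real.log (q s) - Real.log (p s)) ≤ q s - p s := by
    intro s
    rcases eq_or_lt_of_le (hp s) with h | h
    · simp only [← h, zero_mul, sub_zero]
      linarith [(hq s).le]
    · rw [← Real.log_div (hq s).ne' h.ne']
      have h2 := Real.log_le_sub_one_of_pos (div_pos (hq s) h)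
      have h3 : p s * (q s / p s - 1) = q s - p s := by field_simp
      nlinarith
  calc ∑ s, p s * (Real.log (q s) - Real.log (p s)) ≤ ∑ s, (q s - p s) :=
        Finset.sum_le_sum fun s _ => key s
    _ = 0 := by rw [Finset.sum_sub_distrib, hps, hqs, sub_self]

lemma sum_log_eq {T : Type*} [Fintype T] {p q : T → ℝ}
    (hp : ∀ s, 0 ≤ p s) (hq : ∀ s, 0 < q s)
    (hps : ∑ s, p s = 1) (hqs : ∑ s, q s = 1)
    (h0 : ∑ s, p s * (Real.log (q s) - Real.log (p s)) = 0) : p = q := by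
  have key : ∀ s ∈ Finset.univ, p s * (Real.log (q s) - Real.log (p s)) ≤ q s - p s := by
    intro s _
    rcases eq_or_lt_of_le (hp s) with h | h
    · simp only [← h, zero_mul, sub_zero]
      linarith [(hq s).le]
    · rw [← Real.log_div (hq s).ne' h.ne']
      have h2 := Real.log_le_sub_one_of_pos (div_pos (hq s) h)
      have h3 : p s * (q s / p s - 1) = q s - p s := by field_simp
      nlinarith
  have hsum : ∑ s, p s * (Real.log (q s) - Real.log (p s)) = ∑ s, (q s - p s) := by
    rw [h0, Finset.sum_sub_distrib, hps, hqs, sub_self]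
  have heach := (Finset.sum_eq_sum_iff_of_le key).mp hsum
  funext s
  have hs := heach s (Finset.mem_univ s)
  rcases eq_or_lt_of_le (hp s) with h | h
  · exfalso
    rw [← h] at hs
    simp only [zero_mul] at hs
    linarith [hq s]
  · rw [← Real.log_div (hq s).ne' h.ne'] at hs
    by_contra hne
    have hd : q s / p s ≠ 1 := by
      intro hc
      exact hne (by field_simp at hc; linarith)
    have h2 := Real.log_lt_sub_one_of_pos (div_pos (hq s) h) hd
    have h3 : p s * (q s / p s - 1) = q s - p s := by field_simp
    nlinarith

/-- the per-population gap written through logs of BR. -/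
lemma gap_eq [∀ i, Nonempty (S i)] (hβ : 0 < β) (x : ∀ i, S i → ℝ) (i : V)
    (p : S i → ℝ) (hps : ∑ s, p s = 1) :
    (1 / β) * Real.log (Z E A β x i) - (∑ s, p s * payoffTo E A x i s) - vEnt β p
      = -(1 / β) * ∑ s, p s * (Real.log (BR E A β x i s) - Real.log (p s)) := by
  have e1 : ∑ s, p s * (Real.log (BR E A β x i s) - Real.log (p s))
      = ∑ s, (β * (p s * payoffTo E A x i s) - Real.log (Z E A β x i) * p s
        - p s * Real.log (p s)) :=
    Finset.sum_congr rfl fun s _ => by rw [log_BR]; ring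
  rw [vEnt, e1, Finset.sum_sub_distrib, Finset.sum_sub_distrib, ← Finset.mul_sum,
    ← Finset.mul_sum, hps]
  field_simp
  ring

lemma Vfun_nonneg [∀ i, Nonempty (S i)] (hβ : 0 < β) {ω : V → ℝ} (hω : ∀ i, 0 ≤ ω i)
    {x : ∀ i, S i → ℝ} (hx : inProd x) : 0 ≤ Vfun E A β ω x := by
  apply Finset.sum_nonneg
  intro i _
  apply mul_nonneg (hω i)
  rw [gap_eq E A β hβ x i (x i) (hx i).2]
  have hle := sum_log_le (p := x i) (q := BR E A β x i) (hx i).1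
    (fun s => BR_pos E A β x i s) (hx i).2 (BR_sum_one E A β x i)
  have hb : 0 < 1 / β := by positivity
  nlinarith

lemma Vfun_eq_zero_iff [∀ i, Nonempty (S i)] (hβ : 0 < β) {ω : V → ℝ} (hω : ∀ i, 0 < ω i)
    {x : ∀ i, S i → ℝ} (hx : inProd x) (h0 : Vfun E A β ω x = 0) :
    isQRE E A β x := by
  refine ⟨hx, fun i => ?_⟩
  have hterm : ∀ i ∈ Finset.univ, (0:ℝ) ≤ ω i * ((1 / β) * Real.log (Z E A β x i)
      - (∑ s : S i, x i s * payoffTo E A x i s) - vEnt β (x i)) := by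
    intro i _
    apply mul_nonneg (hω i).le
    rw [gap_eq E A β hβ x i (x i) (hx i).2]
    have hle := sum_log_le (p := x i) (q := BR E A β x i) (hx i).1
      (fun s => BR_pos E A β x i s) (hx i).2 (BR_sum_one E A β x i)
    have hb : 0 < 1 / β := by positivity
    nlinarith
  have hz := (Finset.sum_eq_zero_iff_of_nonneg hterm).mp h0 i (Finset.mem_univ i)
  have hz2 : (1 / β) * Real.log (Z E A β x i)
      - (∑ s : S i, x i s * payoffTo E A x i s) - vEnt β (x i) = 0 := by
    have := (hω i).ne'
    rcases mul_eq_zero.mp hz with h | h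
    · exact absurd h this
    · exact h
  rw [gap_eq E A β hβ x i (x i) (hx i).2] at hz2
  have hb : (1 / β) ≠ 0 := by positivity
  have hs0 : ∑ s, x i s * (Real.log (BR E A β x i s) - Real.log (x i s)) = 0 := by
    rcases mul_eq_zero.mp hz2 with h | h
    · exfalso
      have h1 : 0 < 1/β := by positivity
      rw [neg_eq_zero] at h
      linarith
    · exact h
  exact sum_log_eq (hx i).1 (fun s => BR_pos E A β x i s) (hx i).2
    (BR_sum_one E A β x i) hs0

lemma ite_add_zero' {c : Prop} [Decidable c] (a b : ℝ) :
    (if c then a + b else 0) = (if c then a else 0) + (if c then b else 0) := by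
  by_cases h : c <;> simp [h]

lemma ite_sub_zero' {c : Prop} [Decidable c] (a b : ℝ) :
    (if c then a - b else 0) = (if c then a else 0) - (if c then b else 0) := by
  by_cases h : c <;> simp [h]

lemma bilin_sub_right (u v w : ∀ i, S i → ℝ) (i j : V) :
    bilin A u (fun k t => v k t - w k t) i j = bilin A u v i j - bilin A u w i j := by
  simp [bilin, mul_sub, Finset.sum_sub_distrib]

lemma bilin_sub_left (u v w : ∀ i, S i → ℝ) (i j : V) :
    bilin A (fun k t => v k t - w k t) u i j = bilin A v u i j - bilin A w u i j := by
  simp [bilin, sub_mul, Finset.sum_sub_distrib]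

lemma Bf_sub_right (ω : V → ℝ) (u v w : ∀ i, S i → ℝ) :
    Bf E A ω u (fun k t => v k t - w k t) = Bf E A ω u v - Bf E A ω u w := by
  simp [Bf, bilin_sub_right, ite_sub_zero', Finset.sum_sub_distrib, mul_sub]

lemma Bf_sub_left (ω : V → ℝ) (u v w : ∀ i, S i → ℝ) :
    Bf E A ω (fun k t => v k t - w k t) u = Bf E A ω v u - Bf E A ω w u := by
  simp [Bf, bilin_sub_left, ite_sub_zero', Finset.sum_sub_distrib, mul_sub]

lemma Bf_self_eq_zero {ω : V → ℝ} (hzs : weightedZeroSum E A ω)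
    {x : ∀ i, S i → ℝ} (hx : inProd x) : Bf E A ω x x = 0 := hzs x hx

lemma Bf_antisymm {ω : V → ℝ} (hzs : weightedZeroSum E A ω)
    {x y : ∀ i, S i → ℝ} (hx : inProd x) (hy : inProd y) :
    Bf E A ω x y + Bf E A ω y x = 0 := by
  set m : ∀ i, S i → ℝ := fun i s => (x i s + y i s) / 2 with hm_def
  have hm : inProd m := by
    intro i
    constructor
    · intro s
      have := (hx i).1 s
      have := (hy i).1 s
      simp only [hm_def]
      positivity
    · simp only [hm_def, ← Finset.sum_div, Finset.sum_add_distrib, (hx i).2, (hy i).2]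
      norm_num
  have hb : ∀ i j, bilin A m m i j =
      (bilin A x x i j + bilin A x y i j + bilin A y x i j + bilin A y y i j) / 4 := by
    intro i j
    have merge : bilin A x x i j + bilin A x y i j + bilin A y x i j + bilin A y y i j
        = ∑ s : S i, ∑ s' : S j, (x i s * A i j s s' * x j s' + x i s * A i j s s' * y j s'
          + y i s * A i j s s' * x j s' + y i s * A i j s s' * y j s') := by
      simp [bilin, Finset.sum_add_distrib]
    rw [merge, Finset.sum_div]
    simp only [bilin]
    refine Finset.sum_congr rfl fun s _ => ?_
    rw [Finset.sum_div]
    refine Finset.sum_congr rfl fun s' _ => ?_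
    simp only [hm_def]
    ring
  have hmm : Bf E A ω m m =
      (Bf E A ω x x + Bf E A ω x y + Bf E A ω y x + Bf E A ω y y) / 4 := by
    have merge : Bf E A ω x x + Bf E A ω x y + Bf E A ω y x + Bf E A ω y y
        = ∑ i, ω i * ∑ j, ((if E i j then bilin A x x i j else 0)
          + (if E i j then bilin A x y i j else 0) + (if E i j then bilin A y x i j else 0)
          + (if E i j then bilin A y y i j else 0)) := by
      simp [Bf, Finset.sum_add_distrib, mul_add]
    rw [merge, Finset.sum_div]
    simp only [Bf]
    refine Finset.sum_congr rfl fun i _ => ?_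
    rw [mul_div_assoc]
    congr 1
    rw [Finset.sum_div]
    refine Finset.sum_congr rfl fun j _ => ?_
    by_cases h : E i j
    · simp only [h, if_true, hb i j]
    · simp [h]
  have h1 := hzs x hx
  have h2 := hzs y hy
  have h3 := hzs m hm
  have h1' : Bf E A ω x x = 0 := h1
  have h2' : Bf E A ω y y = 0 := h2
  have h3' : Bf E A ω m m = 0 := h3
  rw [h3', h1', h2'] at hmm
  linarith

/-- The derivative expression of the Lyapunov function along direction `d` at `x`. -/
noncomputable def Wexpr (ω : V → ℝ) (x d : ∀ i, S i → ℝ) : ℝ :=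
  ∑ i, ω i * ((∑ s : S i, BR E A β x i s * payoffTo E A d i s)
    - (∑ s : S i, (d i s * payoffTo E A x i s + x i s * payoffTo E A d i s))
    + (1 / β) * ∑ s : S i, (Real.log (x i s) + 1) * d i s)

lemma LSE_decomp [∀ i, Nonempty (S i)] (hβ : 0 < β) (x : ∀ i, S i → ℝ) (i : V) :
    (1 / β) * Real.log (Z E A β x i)
      = (∑ s : S i, BR E A β x i s * payoffTo E A x i s) + vEnt β (BR E A β x i) := by
  have h := gap_eq E A β hβ x i (BR E A β x i) (BR_sum_one E A β x i)
  simp only [sub_self, mul_zero, Finset.sum_const_zero] at h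
  linarith [h]

lemma Vfun_decomp [∀ i, Nonempty (S i)] (hβ : 0 < β) (ω : V → ℝ) (x : ∀ i, S i → ℝ) :
    Vfun E A β ω x = Bf E A ω (BR E A β x) x - Bf E A ω x x
      + ∑ i, ω i * (vEnt β (BR E A β x i) - vEnt β (x i)) := by
  simp only [Vfun, Bf, ← sum_mul_payoff]
  rw [← Finset.sum_sub_distrib, ← Finset.sum_add_distrib]
  refine Finset.sum_congr rfl fun i _ => ?_
  rw [LSE_decomp E A β hβ x i, ← mul_sub, ← mul_add]
  congr 1
  ring

lemma W0_add_V [∀ i, Nonempty (S i)] (hβ : 0 < β) {ω : V → ℝ}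
    (hzs : weightedZeroSum E A ω)
    {x : ∀ i, S i → ℝ} (hx : inProd x) (hxpos : ∀ i s, 0 < x i s) :
    Wexpr E A β ω x (fun i s => BR E A β x i s - x i s) + Vfun E A β ω x
      = (1 / β) * ∑ i, ω i *
          ∑ s : S i, BR E A β x i s * (Real.log (x i s) - Real.log (BR E A β x i s)) := by
  have hbΔ : inProd (BR E A β x) := BR_inProd E A β x
  have e1 : Wexpr E A β ω x (fun i s => BR E A β x i s - x i s)
      = Bf E A ω (BR E A β x) (fun i s => BR E A β x i s - x i s)
        - Bf E A ω (fun i s => BR E A β x i s - x i s) x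
        - Bf E A ω x (fun i s => BR E A β x i s - x i s)
        + ∑ i, ω i * ((1 / β) * ∑ s : S i, (Real.log (x i s) + 1) * (BR E A β x i s - x i s)) := by
    simp only [Wexpr, Bf, Finset.sum_add_distrib, ← sum_mul_payoff]
    rw [← Finset.sum_sub_distrib, ← Finset.sum_sub_distrib, ← Finset.sum_add_distrib]
    exact Finset.sum_congr rfl fun i _ => by ring
  have hr1 : Bf E A ω (BR E A β x) (fun i s => BR E A β x i s - x i s)
      = Bf E A ω (BR E A β x) (BR E A β x) - Bf E A ω (BR E A β x) x :=
    Bf_sub_right E A ω (BR E A β x) (BR E A β x) x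
  have hr2 : Bf E A ω (fun i s => BR E A β x i s - x i s) x
      = Bf E A ω (BR E A β x) x - Bf E A ω x x :=
    Bf_sub_left E A ω x (BR E A β x) x
  have hr3 : Bf E A ω x (fun i s => BR E A β x i s - x i s)
      = Bf E A ω x (BR E A β x) - Bf E A ω x x :=
    Bf_sub_right E A ω x (BR E A β x) x
  have hbb : Bf E A ω (BR E A β x) (BR E A β x) = 0 := hzs _ hbΔ
  have hxx : Bf E A ω x x = 0 := hzs x hx
  have hanti : Bf E A ω (BR E A β x) x + Bf E A ω x (BR E A β x) = 0 :=
    Bf_antisymm E A hzs hbΔ hx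
  have e3 : ∀ i, ∑ s : S i, (Real.log (x i s) + 1) * (BR E A β x i s - x i s)
      = (∑ s : S i, BR E A β x i s * Real.log (x i s))
        - ∑ s : S i, x i s * Real.log (x i s) := by
    intro i
    have hpt : ∀ s, (Real.log (x i s) + 1) * (BR E A β x i s - x i s)
        = (BR E A β x i s * Real.log (x i s) - x i s * Real.log (x i s))
          + (BR E A β x i s - x i s) := fun s => by ring
    rw [Finset.sum_congr rfl fun s _ => hpt s, Finset.sum_add_distrib,
      Finset.sum_sub_distrib, Finset.sum_sub_distrib, (hx i).2, BR_sum_one]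
    ring
  have e5 : (∑ i, ω i * ((1 / β) * ∑ s : S i, (Real.log (x i s) + 1) * (BR E A β x i s - x i s)))
      + ∑ i, ω i * (vEnt β (BR E A β x i) - vEnt β (x i))
      = (1 / β) * ∑ i, ω i *
          ∑ s : S i, BR E A β x i s * (Real.log (x i s) - Real.log (BR E A β x i s)) := by
    rw [Finset.mul_sum, ← Finset.sum_add_distrib]
    refine Finset.sum_congr rfl fun i _ => ?_
    rw [e3 i]
    have hmerge : ∑ s : S i, BR E A β x i s * (Real.log (x i s) - Real.log (BR E A β x i s))
        = (∑ s : S i, BR E A β x i s * Real.log (x i s))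
          - ∑ s : S i, BR E A β x i s * Real.log (BR E A β x i s) := by
      rw [← Finset.sum_sub_distrib]
      exact Finset.sum_congr rfl fun s _ => by ring
    simp only [vEnt, hmerge]
    ring
  rw [e1, Vfun_decomp E A β hβ ω x]
  linarith [e5, hr1, hr2, hr3, hbb, hxx, hanti]

lemma W0_le [∀ i, Nonempty (S i)] (hβ : 0 < β) {ω : V → ℝ} (hω : ∀ i, 0 ≤ ω i)
    (hzs : weightedZeroSum E A ω)
    {x : ∀ i, S i → ℝ} (hx : inProd x) (hxpos : ∀ i s, 0 < x i s) :
    Wexpr E A β ω x (fun i s => BR E A β x i s - x i s) ≤ -Vfun E A β ω x := by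
  have h := W0_add_V E A β hβ hzs hx hxpos
  have hKL : ∑ i, ω i * ∑ s : S i, BR E A β x i s *
      (Real.log (x i s) - Real.log (BR E A β x i s)) ≤ 0 := by
    apply Finset.sum_nonpos
    intro i _
    have hle := sum_log_le (p := BR E A β x i) (q := x i)
      (fun s => (BR_pos E A β x i s).le) (fun s => hxpos i s)
      (BR_sum_one E A β x i) (hx i).2
    exact mul_nonpos_of_nonneg_of_nonpos (hω i) hle
  have hb : 0 < 1 / β := by positivity
  nlinarith

/-- Row bound constant. -/
noncomputable def cA (i : V) (s : S i) : ℝ := ∑ j, ∑ t : S j, |A i j s t|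

/-- Global bound constant. -/
noncomputable def CA : ℝ := ∑ p : Σ i, S i, cA A p.1 p.2

lemma cA_nonneg (i : V) (s : S i) : 0 ≤ cA A i s := by
  apply Finset.sum_nonneg; intro j _; positivity

lemma cA_le_CA (i : V) (s : S i) : cA A i s ≤ CA A := by
  have := Finset.single_le_sum (f := fun p : Σ i, S i => cA A p.1 p.2)
    (fun p _ => cA_nonneg A p.1 p.2) (Finset.mem_univ ⟨i, s⟩)
  exact this

lemma CA_nonneg : 0 ≤ CA A :=
  Finset.sum_nonneg fun p _ => cA_nonneg A p.1 p.2

lemma payoff_abs_le (d : ∀ i, S i → ℝ) (ε : ℝ) (hd : ∀ j t, |d j t| ≤ ε)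
    (i : V) (s : S i) : |payoffTo E A d i s| ≤ cA A i s * ε := by
  have hε : 0 ≤ ε := le_trans (abs_nonneg _) (hd i s)
  calc |payoffTo E A d i s| ≤ ∑ j, |if E i j then ∑ t : S j, A i j s t * d j t else 0| :=
      Finset.abs_sum_le_sum_abs _ _
    _ ≤ ∑ j, (∑ t : S j, |A i j s t|) * ε := by
        apply Finset.sum_le_sum; intro j _
        by_cases h : E i j
        · simp only [h, if_true]
          calc |∑ t : S j, A i j s t * d j t| ≤ ∑ t : S j, |A i j s t * d j t| :=
              Finset.abs_sum_le_sum_abs _ _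
            _ ≤ ∑ t : S j, |A i j s t| * ε := by
                apply Finset.sum_le_sum; intro t _
                rw [abs_mul]
                exact mul_le_mul_of_nonneg_left (hd j t) (abs_nonneg _)
            _ = (∑ t : S j, |A i j s t|) * ε := by rw [Finset.sum_mul]
        · simp only [h, if_false, abs_zero]
          positivity
    _ = cA A i s * ε := by rw [cA, Finset.sum_mul]

lemma payoff_abs_le_CA (d : ∀ i, S i → ℝ) (ε : ℝ) (hε : 0 ≤ ε) (hd : ∀ j t, |d j t| ≤ ε)
    (i : V) (s : S i) : |payoffTo E A d i s| ≤ CA A * ε :=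
  le_trans (payoff_abs_le E A d ε hd i s) (mul_le_mul_of_nonneg_right (cA_le_CA A i s) hε)

lemma inProd_le_one {x : ∀ i, S i → ℝ} (hx : inProd x) (i : V) (s : S i) : x i s ≤ 1 := by
  rw [← (hx i).2]
  exact Finset.single_le_sum (fun t _ => (hx i).1 t) (Finset.mem_univ s)

lemma payoff_abs_le_CA_of_inProd {x : ∀ i, S i → ℝ} (hx : inProd x) (i : V) (s : S i) :
    |payoffTo E A x i s| ≤ CA A := by
  have h := payoff_abs_le_CA E A x 1 zero_le_one
    (fun j t => abs_le.mpr ⟨by linarith [(hx j).1 t], inProd_le_one hx j t⟩) i s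
  simpa using h

/-- Bound on the perturbation part of the derivative of the Lyapunov function. -/
lemma Wexpr_abs_le [∀ i, Nonempty (S i)] (hβ : 0 < β) (ω : V → ℝ) (δ' : ℝ)
    (hδ'0 : 0 < δ') (hδ'1 : δ' ≤ 1) :
    ∃ K, 0 ≤ K ∧ ∀ (x p : ∀ i, S i → ℝ) (ε : ℝ), inProd x → (∀ i s, δ' ≤ x i s) →
      0 ≤ ε → (∀ j t, |p j t| ≤ ε) → |Wexpr E A β ω x p| ≤ K * ε := by
  set L : ℝ := |Real.log δ'| with hL
  have hL0 : 0 ≤ L := abs_nonneg _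
  set Ki : V → ℝ := fun i => CA A + 2 * (Fintype.card (S i)) * CA A
    + (1 / β) * (Fintype.card (S i)) * (L + 1) with hKi
  have hKi0 : ∀ i, 0 ≤ Ki i := by
    intro i
    have h1 := CA_nonneg A
    have h2 : (0:ℝ) ≤ (Fintype.card (S i) : ℝ) := Nat.cast_nonneg _
    have h3 : 0 < 1 / β := one_div_pos.mpr hβ
    have h4 : (0:ℝ) ≤ 1 / β * (Fintype.card (S i)) * (L + 1) := by
      apply mul_nonneg (mul_nonneg h3.le h2); linarith
    have h5 : (0:ℝ) ≤ 2 * (Fintype.card (S i)) * CA A := by positivity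
    rw [hKi]
    dsimp only
    linarith
  refine ⟨∑ i, |ω i| * Ki i,
    Finset.sum_nonneg fun i _ => mul_nonneg (abs_nonneg _) (hKi0 i), ?_⟩
  intro x p ε hx hxlb hε hp
  have hlog : ∀ i (s : S i), |Real.log (x i s) + 1| ≤ L + 1 := by
    intro i s
    have hxs0 : 0 < x i s := lt_of_lt_of_le hδ'0 (hxlb i s)
    have h1 : Real.log δ' ≤ Real.log (x i s) := Real.log_le_log hδ'0 (hxlb i s)
    have h2 : Real.log (x i s) ≤ 0 := Real.log_nonpos hxs0.le (inProd_le_one hx i s)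
    have h3 : Real.log δ' ≤ 0 := Real.log_nonpos hδ'0.le hδ'1
    rw [hL, abs_of_nonpos h3]
    rw [abs_le]
    constructor <;> linarith
  have inner_le : ∀ i, |(∑ s : S i, BR E A β x i s * payoffTo E A p i s)
      - (∑ s : S i, (p i s * payoffTo E A x i s + x i s * payoffTo E A p i s))
      + (1 / β) * ∑ s : S i, (Real.log (x i s) + 1) * p i s| ≤ Ki i * ε := by
    intro i
    have hT1 : |∑ s : S i, BR E A β x i s * payoffTo E A p i s| ≤ CA A * ε := by
      calc |∑ s : S i, BR E A β x i s * payoffTo E A p i s|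
          ≤ ∑ s : S i, |BR E A β x i s * payoffTo E A p i s| := Finset.abs_sum_le_sum_abs _ _
        _ ≤ ∑ s : S i, BR E A β x i s * (CA A * ε) := by
            apply Finset.sum_le_sum; intro s _
            rw [abs_mul, abs_of_pos (BR_pos E A β x i s)]
            exact mul_le_mul_of_nonneg_left (payoff_abs_le_CA E A p ε hε hp i s)
              (BR_pos E A β x i s).le
        _ = CA A * ε := by rw [← Finset.sum_mul, BR_sum_one, one_mul]
    have hT2 : |∑ s : S i, (p i s * payoffTo E A x i s + x i s * payoffTo E A p i s)|
        ≤ 2 * (Fintype.card (S i)) * CA A * ε := by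
      calc |∑ s : S i, (p i s * payoffTo E A x i s + x i s * payoffTo E A p i s)|
          ≤ ∑ s : S i, |p i s * payoffTo E A x i s + x i s * payoffTo E A p i s| :=
            Finset.abs_sum_le_sum_abs _ _
        _ ≤ ∑ s : S i, (2 * CA A * ε) := by
            apply Finset.sum_le_sum; intro s _
            have h1 : |p i s * payoffTo E A x i s| ≤ ε * CA A := by
              rw [abs_mul]
              exact mul_le_mul (hp i s) (payoff_abs_le_CA_of_inProd E A hx i s)
                (abs_nonneg _) hε
            have h2 : |x i s * payoffTo E A p i s| ≤ 1 * (CA A * ε) := by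
              rw [abs_mul]
              exact mul_le_mul (abs_le.mpr ⟨by linarith [(hx i).1 s], inProd_le_one hx i s⟩)
                (payoff_abs_le_CA E A p ε hε hp i s) (abs_nonneg _) zero_le_one
            calc |p i s * payoffTo E A x i s + x i s * payoffTo E A p i s|
                ≤ |p i s * payoffTo E A x i s| + |x i s * payoffTo E A p i s| := abs_add_le _ _
              _ ≤ 2 * CA A * ε := by linarith
        _ = 2 * (Fintype.card (S i)) * CA A * ε := by
            rw [Finset.sum_const, Finset.card_univ, nsmul_eq_mul]
            ring
    have hT3 : |(1 / β) * ∑ s : S i, (Real.log (x i s) + 1) * p i s|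
        ≤ (1 / β) * (Fintype.card (S i)) * (L + 1) * ε := by
      rw [abs_mul, abs_of_pos (by positivity : (0:ℝ) < 1 / β)]
      have : |∑ s : S i, (Real.log (x i s) + 1) * p i s| ≤ (Fintype.card (S i)) * ((L + 1) * ε) := by
        calc |∑ s : S i, (Real.log (x i s) + 1) * p i s|
            ≤ ∑ s : S i, |(Real.log (x i s) + 1) * p i s| := Finset.abs_sum_le_sum_abs _ _
          _ ≤ ∑ s : S i, (L + 1) * ε := by
              apply Finset.sum_le_sum; intro s _
              rw [abs_mul]
              exact mul_le_mul (hlog i s) (hp i s) (abs_nonneg _) (by linarith)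
          _ = (Fintype.card (S i)) * ((L + 1) * ε) := by
              rw [Finset.sum_const, Finset.card_univ, nsmul_eq_mul]
      calc (1 / β) * |∑ s : S i, (Real.log (x i s) + 1) * p i s|
          ≤ (1 / β) * ((Fintype.card (S i)) * ((L + 1) * ε)) :=
            mul_le_mul_of_nonneg_left this (by positivity)
        _ = (1 / β) * (Fintype.card (S i)) * (L + 1) * ε := by ring
    calc |(∑ s : S i, BR E A β x i s * payoffTo E A p i s)
        - (∑ s : S i, (p i s * payoffTo E A x i s + x i s * payoffTo E A p i s))
        + (1 / β) * ∑ s : S i, (Real.log (x i s) + 1) * p i s|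
        ≤ |(∑ s : S i, BR E A β x i s * payoffTo E A p i s)
          - (∑ s : S i, (p i s * payoffTo E A x i s + x i s * payoffTo E A p i s))|
          + |(1 / β) * ∑ s : S i, (Real.log (x i s) + 1) * p i s| := abs_add_le _ _
      _ ≤ |∑ s : S i, BR E A β x i s * payoffTo E A p i s|
          + |∑ s : S i, (p i s * payoffTo E A x i s + x i s * payoffTo E A p i s)|
          + |(1 / β) * ∑ s : S i, (Real.log (x i s) + 1) * p i s| := by
            have := abs_sub (∑ s : S i, BR E A β x i s * payoffTo E A p i s)
              (∑ s : S i, (p i s * payoffTo E A x i s + x i s * payoffTo E A p i s))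
            linarith [abs_sub_abs_le_abs_sub (∑ s : S i, BR E A β x i s * payoffTo E A p i s)
              (∑ s : S i, (p i s * payoffTo E A x i s + x i s * payoffTo E A p i s)),
              abs_sub_le_iff.mp (le_refl |(∑ s : S i, BR E A β x i s * payoffTo E A p i s)
              - (∑ s : S i, (p i s * payoffTo E A x i s + x i s * payoffTo E A p i s))|)]
      _ ≤ CA A * ε + 2 * (Fintype.card (S i)) * CA A * ε
          + (1 / β) * (Fintype.card (S i)) * (L + 1) * ε := by linarith
      _ = Ki i * ε := by rw [hKi]; ring
  calc |Wexpr E A β ω x p| ≤ ∑ i, |ω i * ((∑ s : S i, BR E A β x i s * payoffTo E A p i s)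
      - (∑ s : S i, (p i s * payoffTo E A x i s + x i s * payoffTo E A p i s))
      + (1 / β) * ∑ s : S i, (Real.log (x i s) + 1) * p i s)| := Finset.abs_sum_le_sum_abs _ _
    _ ≤ ∑ i, |ω i| * (Ki i * ε) := by
        apply Finset.sum_le_sum; intro i _
        rw [abs_mul]
        exact mul_le_mul_of_nonneg_left (inner_le i) (abs_nonneg _)
    _ = (∑ i, |ω i| * Ki i) * ε := by rw [Finset.sum_mul]; exact Finset.sum_congr rfl fun i _ => by ring

/-- Additivity of `payoffTo` in the belief argument. -/
lemma payoffTo_add (y p : ∀ i, S i → ℝ) (i : V) (s : S i) :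
    payoffTo E A (fun k t => y k t + p k t) i s = payoffTo E A y i s + payoffTo E A p i s := by
  simp only [payoffTo, ← Finset.sum_add_distrib]
  refine Finset.sum_congr rfl fun j _ => ?_
  by_cases h : E i j <;> simp [h, mul_add, Finset.sum_add_distrib]

lemma Wexpr_add_right (ω : V → ℝ) (x y p : ∀ i, S i → ℝ) :
    Wexpr E A β ω x (fun k t => y k t + p k t)
      = Wexpr E A β ω x y + Wexpr E A β ω x p := by
  simp only [Wexpr, payoffTo_add, ← Finset.sum_add_distrib]
  refine Finset.sum_congr rfl fun i _ => ?_
  have e1 : ∑ s : S i, BR E A β x i s * (payoffTo E A y i s + payoffTo E A p i s)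
      = ∑ s : S i, (BR E A β x i s * payoffTo E A y i s + BR E A β x i s * payoffTo E A p i s) :=
    Finset.sum_congr rfl fun s _ => by ring
  have e2 : ∑ s : S i, ((y i s + p i s) * payoffTo E A x i s
        + x i s * (payoffTo E A y i s + payoffTo E A p i s))
      = ∑ s : S i, ((y i s * payoffTo E A x i s + x i s * payoffTo E A y i s)
        + (p i s * payoffTo E A x i s + x i s * payoffTo E A p i s)) :=
    Finset.sum_congr rfl fun s _ => by ring
  have e3 : ∑ s : S i, (Real.log (x i s) + 1) * (y i s + p i s)
      = ∑ s : S i, ((Real.log (x i s) + 1) * y i s + (Real.log (x i s) + 1) * p i s) :=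
    Finset.sum_congr rfl fun s _ => by ring
  rw [e1, e2, e3]
  simp only [Finset.sum_add_distrib]
  ring

section Deriv

variable [∀ i, Nonempty (S i)]

lemma hasDerivAt_coord {μ : ℝ → ∀ i, S i → ℝ} {D : ∀ i, S i → ℝ} {τ : ℝ}
    (hμ : HasDerivAt μ D τ) (j : V) (t : S j) :
    HasDerivAt (fun τ' => μ τ' j t) (D j t) τ :=
  hasDerivAt_pi.mp (hasDerivAt_pi.mp hμ j) t

lemma hasDerivAt_payoff {μ : ℝ → ∀ i, S i → ℝ} {D : ∀ i, S i → ℝ} {τ : ℝ}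
    (hμ : HasDerivAt μ D τ) (i : V) (s : S i) :
    HasDerivAt (fun t => payoffTo E A (μ t) i s) (payoffTo E A D i s) τ := by
  simp only [payoffTo]
  apply HasDerivAt.fun_sum
  intro j _
  by_cases h : E i j
  · simp only [h, if_true]
    exact HasDerivAt.fun_sum fun t' _ => (hasDerivAt_coord hμ j t').const_mul _
  · simp only [h, if_false]
    exact hasDerivAt_const _ _

lemma hasDerivAt_V (hβ : 0 < β) (ω : V → ℝ) {μ : ℝ → ∀ i, S i → ℝ}
    {D : ∀ i, S i → ℝ} {τ : ℝ} (hμ : HasDerivAt μ D τ)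
    (hpos : ∀ i s, 0 < μ τ i s) :
    HasDerivAt (fun t => Vfun E A β ω (μ t)) (Wexpr E A β ω (μ τ) D) τ := by
  have hZ : ∀ i, HasDerivAt (fun t => Z E A β (μ t) i)
      (∑ s : S i, Real.exp (β * payoffTo E A (μ τ) i s) * (β * payoffTo E A D i s)) τ := by
    intro i
    apply HasDerivAt.fun_sum
    intro s _
    exact ((hasDerivAt_payoff E A hμ i s).const_mul β).exp
  have hT1 : ∀ i, HasDerivAt (fun t => (1 / β) * Real.log (Z E A β (μ t) i))
      ((1 / β) * ((∑ s : S i, Real.exp (β * payoffTo E A (μ τ) i s)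
        * (β * payoffTo E A D i s)) / Z E A β (μ τ) i)) τ :=
    fun i => ((hZ i).log (Z_pos E A β (μ τ) i).ne').const_mul _
  have hT2 : ∀ i, HasDerivAt (fun t => ∑ s : S i, μ t i s * payoffTo E A (μ t) i s)
      (∑ s : S i, (D i s * payoffTo E A (μ τ) i s + μ τ i s * payoffTo E A D i s)) τ :=
    fun i => HasDerivAt.fun_sum fun s _ =>
      (hasDerivAt_coord hμ i s).mul (hasDerivAt_payoff E A hμ i s)
  have hT3 : ∀ i, HasDerivAt (fun t => vEnt β (μ t i))
      (-(1 / β) * ∑ s : S i, (D i s * Real.log (μ τ i s)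
        + μ τ i s * (D i s / μ τ i s))) τ := by
    intro i
    simp only [vEnt]
    apply HasDerivAt.const_mul
    apply HasDerivAt.fun_sum
    intro s _
    exact (hasDerivAt_coord hμ i s).mul ((hasDerivAt_coord hμ i s).log (hpos i s).ne')
  have hnat : HasDerivAt (fun t => Vfun E A β ω (μ t))
      (∑ i, ω i * ((1 / β) * ((∑ s : S i, Real.exp (β * payoffTo E A (μ τ) i s)
          * (β * payoffTo E A D i s)) / Z E A β (μ τ) i)
        - (∑ s : S i, (D i s * payoffTo E A (μ τ) i s + μ τ i s * payoffTo E A D i s))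
        - (-(1 / β) * ∑ s : S i, (D i s * Real.log (μ τ i s)
          + μ τ i s * (D i s / μ τ i s))))) τ := by
    simp only [Vfun]
    exact HasDerivAt.fun_sum fun i _ => (((hT1 i).sub (hT2 i)).sub (hT3 i)).const_mul (ω i)
  have hval : (∑ i, ω i * ((1 / β) * ((∑ s : S i, Real.exp (β * payoffTo E A (μ τ) i s)
          * (β * payoffTo E A D i s)) / Z E A β (μ τ) i)
        - (∑ s : S i, (D i s * payoffTo E A (μ τ) i s + μ τ i s * payoffTo E A D i s))
        - (-(1 / β) * ∑ s : S i, (D i s * Real.log (μ τ i s)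
          + μ τ i s * (D i s / μ τ i s)))))
      = Wexpr E A β ω (μ τ) D := by
    rw [Wexpr]
    refine Finset.sum_congr rfl fun i _ => ?_
    congr 1
    have e1 : (1 / β) * ((∑ s : S i, Real.exp (β * payoffTo E A (μ τ) i s)
        * (β * payoffTo E A D i s)) / Z E A β (μ τ) i)
        = ∑ s : S i, BR E A β (μ τ) i s * payoffTo E A D i s := by
      have hZne := (Z_pos E A β (μ τ) i).ne'
      have h2 : ∑ s : S i, Real.exp (β * payoffTo E A (μ τ) i s) * (β * payoffTo E A D i s)
          = β * ∑ s : S i, Real.exp (β * payoffTo E A (μ τ) i s) * payoffTo E A D i s := by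
        rw [Finset.mul_sum]; exact Finset.sum_congr rfl fun s _ => by ring
      have h3 : ∑ s : S i, BR E A β (μ τ) i s * payoffTo E A D i s
          = (∑ s : S i, Real.exp (β * payoffTo E A (μ τ) i s) * payoffTo E A D i s)
            / Z E A β (μ τ) i := by
        rw [Finset.sum_div]
        refine Finset.sum_congr rfl fun s _ => ?_
        rw [BR_def]; ring
      rw [h2, h3, mul_div_assoc']
      congr 1
      field_simp
    have e3 : -(1 / β) * ∑ s : S i, (D i s * Real.log (μ τ i s)
        + μ τ i s * (D i s / μ τ i s))
        = -((1 / β) * ∑ s : S i, (Real.log (μ τ i s) + 1) * D i s) := by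
      have : ∀ s : S i, D i s * Real.log (μ τ i s) + μ τ i s * (D i s / μ τ i s)
          = (Real.log (μ τ i s) + 1) * D i s := by
        intro s
        have hne := (hpos i s).ne'
        field_simp
      rw [Finset.sum_congr rfl fun s _ => this s]
      ring
    rw [e1, e3]
    ring
  exact hval ▸ hnat

end Deriv

section SecondPartial

variable [∀ i, Nonempty (S i)] [DecidableEq V] [∀ i, DecidableEq (S i)]

lemma contDiff_coord (j : V) (t : S j) :
    ContDiff ℝ (⊤ : ℕ∞) (fun x : ∀ i, S i → ℝ => x j t) :=
  contDiff_pi.mp (contDiff_pi.mp contDiff_id j) t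

lemma contDiff_payoffTo (i : V) (s : S i) :
    ContDiff ℝ (⊤ : ℕ∞) (fun x : ∀ i, S i → ℝ => payoffTo E A x i s) := by
  simp only [payoffTo]
  apply ContDiff.sum
  intro j _
  by_cases h : E i j
  · simp only [h, if_true]
    exact ContDiff.sum fun t _ => contDiff_const.mul (contDiff_coord j t)
  · simp only [h, if_false]
    exact contDiff_const

lemma contDiff_BR (i : V) (s : S i) :
    ContDiff ℝ (⊤ : ℕ∞) (fun x : ∀ i, S i → ℝ => BR E A β x i s) := by
  have h1 : ∀ t : S i, ContDiff ℝ (⊤ : ℕ∞) (fun x : ∀ i, S i → ℝ =>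
      Real.exp (β * payoffTo E A x i t)) :=
    fun t => (contDiff_const.mul (contDiff_payoffTo E A i t)).exp
  apply ContDiff.div (h1 s) (ContDiff.sum fun t _ => h1 t)
  intro x
  exact (Z_pos E A β x i).ne'

lemma secondPartialBR_eq (x : ∀ i, S i → ℝ) (i : V) (s : S i) (j : V) (s' : S j) :
    secondPartialBR E A β x i s j s'
      = fderiv ℝ (fun y => fderiv ℝ (fun z => BR E A β z i s) y
          (Pi.single (M := fun k => S k → ℝ) j (Pi.single s' (1 : ℝ)))) x
          (Pi.single (M := fun k => S k → ℝ) j (Pi.single s' (1 : ℝ))) := by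
  set e : ∀ k, S k → ℝ := Pi.single (M := fun k => S k → ℝ) j (Pi.single s' (1 : ℝ)) with he
  have hgc : ContDiff ℝ (⊤ : ℕ∞) (fun z : ∀ i, S i → ℝ => BR E A β z i s) := contDiff_BR E A β i s
  set F : (∀ i, S i → ℝ) → ℝ :=
    fun y => fderiv ℝ (fun z => BR E A β z i s) y e with hF
  have hFc : ContDiff ℝ (⊤ : ℕ∞) F :=
    ((hgc.fderiv_right (m := (⊤ : ℕ∞)) (mod_cast le_top))).clm_apply contDiff_const
  have hline : ∀ r : ℝ, HasDerivAt (fun r' : ℝ => (fun k => x k + r' • e k)) e r := by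
    intro r
    rw [hasDerivAt_pi]
    intro k
    rw [hasDerivAt_pi]
    intro t
    simpa using ((hasDerivAt_id r).smul_const (e k t)).const_add (x k t)
  have hd1 : ∀ r : ℝ, HasDerivAt (fun r' : ℝ => BR E A β (fun k => x k + r' • e k) i s)
      (F (fun k => x k + r • e k)) r := by
    intro r
    have hg' : HasFDerivAt (fun z : ∀ i, S i → ℝ => BR E A β z i s)
        (fderiv ℝ (fun z : ∀ i, S i → ℝ => BR E A β z i s) (fun k => x k + r • e k))
        (fun k => x k + r • e k) :=
      (hgc.differentiable (by simp)).differentiableAt.hasFDerivAt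
    exact hg'.comp_hasDerivAt r (hline r)
  have hderiv1 : deriv (fun r' : ℝ => BR E A β (fun k => x k + r' • e k) i s)
      = fun r => F (fun k => x k + r • e k) := funext fun r => (hd1 r).deriv
  have h0 : (fun k => x k + (0 : ℝ) • e k) = x := by
    funext k; simp
  have hd2 : HasDerivAt (fun r : ℝ => F (fun k => x k + r • e k)) (fderiv ℝ F x e) 0 := by
    have hF' : HasFDerivAt F (fderiv ℝ F x) x :=
      (hFc.differentiable (by simp)).differentiableAt.hasFDerivAt
    exact hF'.comp_hasDerivAt_of_eq 0 (hline 0) h0.symm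
  have : secondPartialBR E A β x i s j s'
      = deriv (deriv (fun r' : ℝ => BR E A β (fun k => x k + r' • e k) i s)) 0 := by
    rw [secondPartialBR, show (2 : ℕ) = 1 + 1 from rfl, iteratedDeriv_succ, iteratedDeriv_one]
  rw [this, hderiv1, hd2.deriv]

lemma continuous_secondPartialBR (i : V) (s : S i) (j : V) (s' : S j) :
    Continuous (fun x => secondPartialBR E A β x i s j s') := by
  have hrw : (fun x => secondPartialBR E A β x i s j s')
      = fun x => fderiv ℝ (fun y => fderiv ℝ (fun z => BR E A β z i s) y
          (Pi.single (M := fun k => S k → ℝ) j (Pi.single s' (1 : ℝ)))) x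
          (Pi.single (M := fun k => S k → ℝ) j (Pi.single s' (1 : ℝ))) :=
    funext fun x => secondPartialBR_eq E A β x i s j s'
  rw [hrw]
  have hgc : ContDiff ℝ (⊤ : ℕ∞) (fun z : ∀ i, S i → ℝ => BR E A β z i s) := contDiff_BR E A β i s
  have hFc : ContDiff ℝ (⊤ : ℕ∞) (fun y => fderiv ℝ (fun z : ∀ i, S i → ℝ => BR E A β z i s) y
      (Pi.single (M := fun k => S k → ℝ) j (Pi.single s' (1 : ℝ)))) :=
    ((hgc.fderiv_right (m := (⊤ : ℕ∞)) (mod_cast le_top))).clm_apply contDiff_const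
  have h := hFc.continuous_fderiv_apply (by simp)
  exact h.comp (continuous_id.prodMk continuous_const)

lemma isCompact_Delta : IsCompact {x : ∀ i, S i → ℝ | inProd x} := by
  have h : {x : ∀ i, S i → ℝ | inProd x} = Set.pi Set.univ (fun i => stdSimplex ℝ (S i)) := by
    ext x
    simp [inProd, inSimplex, Set.mem_pi, stdSimplex, Set.mem_setOf_eq]
  rw [h]
  exact isCompact_univ_pi fun i => isCompact_stdSimplex ℝ _

lemma exists_G (σ2 : ∀ j, S j → ℝ) : ∃ G, 0 ≤ G ∧ ∀ x, inProd x → ∀ (i : V) (s : S i),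
    |∑ j, if E i j then ∑ s' : S j, σ2 j s' * secondPartialBR E A β x i s j s' else 0| ≤ G := by
  have hcont : ∀ p : Σ i, S i, Continuous (fun x : ∀ i, S i → ℝ =>
      ∑ j, if E p.1 j then ∑ s' : S j, σ2 j s' * secondPartialBR E A β x p.1 p.2 j s' else 0) := by
    intro p
    apply continuous_finset_sum
    intro j _
    by_cases h : E p.1 j
    · simp only [h, if_true]
      exact continuous_finset_sum _ fun s' _ =>
        continuous_const.mul (continuous_secondPartialBR E A β p.1 p.2 j s')
    · simp only [h, if_false]
      exact continuous_const
  have hbd : ∀ p : Σ i, S i, ∃ C, ∀ x ∈ {x : ∀ i, S i → ℝ | inProd x},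
      ‖∑ j, if E p.1 j then ∑ s' : S j, σ2 j s' * secondPartialBR E A β x p.1 p.2 j s' else 0‖ ≤ C :=
    fun p => (isCompact_Delta (S := S)).exists_bound_of_continuousOn (hcont p).continuousOn
  choose C hC using hbd
  refine ⟨∑ p : Σ i, S i, |C p|, Finset.sum_nonneg fun p _ => abs_nonneg _, ?_⟩
  intro x hx i s
  calc |∑ j, if E i j then ∑ s' : S j, σ2 j s' * secondPartialBR E A β x i s j s' else 0|
      ≤ C ⟨i, s⟩ := by simpa [Real.norm_eq_abs] using hC ⟨i, s⟩ x hx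
    _ ≤ |C ⟨i, s⟩| := le_abs_self _
    _ ≤ ∑ p : Σ i, S i, |C p| :=
        Finset.single_le_sum (fun p _ => abs_nonneg (C p)) (Finset.mem_univ (⟨i, s⟩ : Σ i, S i))

end SecondPartial

section Bounds

variable [∀ i, Nonempty (S i)]

/-- Uniform lower bound for logit best responses over the simplex product. -/
lemma BR_lower_bound (hβ : 0 < β) : ∃ δ, 0 < δ ∧ δ ≤ 1 ∧
    ∀ x, inProd x → ∀ (i : V) (s : S i), δ ≤ BR E A β x i s := by
  set N : ℝ := (∑ i, (Fintype.card (S i) : ℝ)) + 1 with hN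
  have hN1 : 1 ≤ N := by
    rw [hN]
    have : (0:ℝ) ≤ ∑ i, (Fintype.card (S i) : ℝ) :=
      Finset.sum_nonneg fun i _ => Nat.cast_nonneg _
    linarith
  have hCA := CA_nonneg A
  refine ⟨Real.exp (-(β * CA A)) / (N * Real.exp (β * CA A)), by positivity, ?_, ?_⟩
  · rw [div_le_one (by positivity)]
    have h1 : Real.exp (-(β * CA A)) ≤ Real.exp (β * CA A) :=
      Real.exp_le_exp.mpr (by nlinarith)
    nlinarith [Real.exp_pos (β * CA A)]
  · intro x hx i s
    have hu : ∀ t : S i, |payoffTo E A x i t| ≤ CA A := fun t =>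
      payoff_abs_le_CA_of_inProd E A hx i t
    have hZle : Z E A β x i ≤ N * Real.exp (β * CA A) := by
      calc Z E A β x i ≤ ∑ _t : S i, Real.exp (β * CA A) := by
            apply Finset.sum_le_sum
            intro t _
            apply Real.exp_le_exp.mpr
            have := (abs_le.mp (hu t)).2
            nlinarith
        _ = (Fintype.card (S i) : ℝ) * Real.exp (β * CA A) := by
            rw [Finset.sum_const, Finset.card_univ, nsmul_eq_mul]
        _ ≤ N * Real.exp (β * CA A) := by
            apply mul_le_mul_of_nonneg_right _ (Real.exp_pos _).le
            rw [hN]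
            have := Finset.single_le_sum
              (f := fun i => (Fintype.card (S i) : ℝ))
              (fun i _ => Nat.cast_nonneg _) (Finset.mem_univ i)
            linarith
    have hnum : Real.exp (-(β * CA A)) ≤ Real.exp (β * payoffTo E A x i s) := by
      apply Real.exp_le_exp.mpr
      have := (abs_le.mp (hu s)).1
      nlinarith
    rw [BR_def]
    exact div_le_div₀ (Real.exp_pos _).le hnum (Z_pos E A β x i) hZle
end Bounds

section Scalar

/-- Scalar comparison: eventually bounded below by δ/2. -/
lemma scalar_lower (f P : ℝ → ℝ) (δ c : ℝ) (hδ : 0 < δ) (hc : 0 ≤ c)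
    (hf : ∀ τ ≥ (0:ℝ), HasDerivAt f (P τ) τ)
    (hP : ∀ τ ≥ (0:ℝ), δ - f τ - c * Real.exp (-2 * τ) ≤ P τ)
    (hf0 : ∀ τ ≥ (0:ℝ), 0 ≤ f τ) :
    ∃ T1 ≥ (0:ℝ), ∀ τ ≥ T1, δ / 2 ≤ f τ := by
  set T0 : ℝ := max 0 (Real.log ((4 * c + 4) / δ)) with hT0
  have hT00 : 0 ≤ T0 := le_max_left _ _
  have hsmall : ∀ τ ≥ T0, c * Real.exp (-2 * τ) ≤ δ / 4 := by
    intro τ hτ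
    have hτ0 : 0 ≤ τ := le_trans hT00 hτ
    have h1 : Real.exp (-2 * τ) ≤ Real.exp (-T0) :=
      Real.exp_le_exp.mpr (by linarith)
    have h3 : (4 * c + 4) / δ ≤ Real.exp T0 := by
      calc (4 * c + 4) / δ = Real.exp (Real.log ((4 * c + 4) / δ)) :=
            (Real.exp_log (by positivity)).symm
        _ ≤ Real.exp T0 := Real.exp_le_exp.mpr (le_max_right _ _)
    have h4 : Real.exp (-T0) ≤ δ / (4 * c + 4) := by
      rw [Real.exp_neg]
      have h5 : (0:ℝ) < (4 * c + 4) / δ := by positivity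
      calc (Real.exp T0)⁻¹ ≤ ((4 * c + 4) / δ)⁻¹ :=
            inv_anti₀ h5 h3
        _ = δ / (4 * c + 4) := by rw [inv_div]
    have h6 : Real.exp (-2 * τ) ≤ δ / (4 * c + 4) := le_trans h1 h4
    have h7 : (0:ℝ) < 4 * c + 4 := by positivity
    have h8 : c * (δ / (4 * c + 4)) ≤ δ / 4 := by
      rw [mul_div_assoc', div_le_div_iff₀ h7 (by norm_num : (0:ℝ) < 4)]
      nlinarith
    calc c * Real.exp (-2 * τ) ≤ c * (δ / (4 * c + 4)) :=
          mul_le_mul_of_nonneg_left h6 hc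
      _ ≤ δ / 4 := h8
  set g : ℝ → ℝ := fun τ => Real.exp τ * (f τ - 3 * δ / 4) with hgdef
  have hgd : ∀ τ ≥ T0, HasDerivAt g
      (Real.exp τ * (f τ - 3 * δ / 4) + Real.exp τ * P τ) τ := by
    intro τ hτ
    exact (Real.hasDerivAt_exp τ).mul ((hf τ (le_trans hT00 hτ)).sub_const _)
  have hmono : MonotoneOn g (Set.Ici T0) := by
    apply monotoneOn_of_deriv_nonneg (convex_Ici T0)
    · intro τ hτ
      exact ((hgd τ hτ).continuousAt).continuousWithinAt
    · intro τ hτ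
      rw [interior_Ici] at hτ
      exact ((hgd τ (le_of_lt hτ)).differentiableAt).differentiableWithinAt
    · intro τ hτ
      rw [interior_Ici] at hτ
      have hτT0 : T0 ≤ τ := le_of_lt hτ
      rw [(hgd τ hτT0).deriv]
      have h5 := hP τ (le_trans hT00 hτT0)
      have h6 := hsmall τ hτT0
      have h7 := Real.exp_pos τ
      have h9 : 0 ≤ f τ + P τ - 3 * δ / 4 := by linarith
      nlinarith [mul_nonneg h7.le h9]
  refine ⟨T0 + 2, by linarith, ?_⟩
  intro τ hτ
  have hτT0 : T0 ≤ τ := by linarith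
  have hmono' : g T0 ≤ g τ :=
    hmono (Set.mem_Ici.mpr le_rfl) (Set.mem_Ici.mpr hτT0) hτT0
  have he2 : (3:ℝ) ≤ Real.exp 2 := by
    nlinarith [Real.add_one_le_exp (2:ℝ), Real.add_one_le_exp (1:ℝ),
      Real.exp_pos (1:ℝ), Real.exp_pos (2:ℝ)]
  have hτexp : Real.exp T0 * Real.exp 2 ≤ Real.exp τ := by
    rw [← Real.exp_add]
    exact Real.exp_le_exp.mpr (by linarith)
  have hfT0 := hf0 T0 hT00
  have h9 : Real.exp T0 * (0 - 3 * δ / 4) ≤ Real.exp τ * (f τ - 3 * δ / 4) := by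
    refine le_trans ?_ hmono'
    rw [hgdef]
    dsimp only
    have := Real.exp_pos T0
    nlinarith
  by_contra hcon
  push_neg at hcon
  have hA : Real.exp τ * (f τ - 3 * δ / 4) < Real.exp τ * (-(δ / 4)) := by
    apply mul_lt_mul_of_pos_left _ (Real.exp_pos τ)
    linarith
  have hB : Real.exp τ * (-(δ / 4)) ≤ Real.exp T0 * (0 - 3 * δ / 4) := by
    have h10 : 3 * Real.exp T0 ≤ Real.exp τ := by
      calc 3 * Real.exp T0 ≤ Real.exp T0 * Real.exp 2 := by
            nlinarith [Real.exp_pos T0]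
        _ ≤ Real.exp τ := hτexp
    nlinarith
  linarith

/-- Grönwall-type decay. -/
lemma gronwall_decay (g W : ℝ → ℝ) (T1 C : ℝ) (hC : 0 ≤ C)
    (hg : ∀ τ ≥ T1, HasDerivAt g (W τ) τ)
    (hW : ∀ τ ≥ T1, W τ ≤ -g τ + C * Real.exp (-2 * τ))
    (hg0 : ∀ τ ≥ T1, 0 ≤ g τ) :
    Tendsto g atTop (nhds 0) := by
  set φ : ℝ → ℝ := fun τ => Real.exp τ * g τ + C * Real.exp (-τ) with hφ
  have hφd : ∀ τ ≥ T1, HasDerivAt φ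
      (Real.exp τ * g τ + Real.exp τ * W τ + C * (-Real.exp (-τ))) τ := by
    intro τ hτ
    have h1 : HasDerivAt (fun τ => Real.exp τ * g τ)
        (Real.exp τ * g τ + Real.exp τ * W τ) τ :=
      (Real.hasDerivAt_exp τ).mul (hg τ hτ)
    have h2 : HasDerivAt (fun τ : ℝ => Real.exp (-τ)) (-Real.exp (-τ)) τ := by
      simpa using ((hasDerivAt_id τ).neg).exp
    exact h1.add (h2.const_mul C)
  have hanti : AntitoneOn φ (Set.Ici T1) := by
    apply antitoneOn_of_deriv_nonpos (convex_Ici T1)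
    · intro τ hτ
      exact ((hφd τ hτ).continuousAt).continuousWithinAt
    · intro τ hτ
      rw [interior_Ici] at hτ
      exact ((hφd τ hτ.le).differentiableAt).differentiableWithinAt
    · intro τ hτ
      rw [interior_Ici] at hτ
      rw [(hφd τ hτ.le).deriv]
      have h3 := hW τ hτ.le
      have h4 := Real.exp_pos τ
      have h5 : Real.exp τ * W τ ≤ Real.exp τ * (-g τ + C * Real.exp (-2 * τ)) :=
        mul_le_mul_of_nonneg_left h3 h4.le
      have h6 : Real.exp τ * Real.exp (-2 * τ) = Real.exp (-τ) := by
        rw [← Real.exp_add]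
        ring_nf
      have h7 : Real.exp τ * (-g τ + C * Real.exp (-2 * τ))
          = -(Real.exp τ * g τ) + C * Real.exp (-τ) := by
        rw [← h6]
        ring
      linarith
  have hub : ∀ τ ≥ T1, g τ ≤ φ T1 * Real.exp (-τ) := by
    intro τ hτ
    have h8 := hanti (Set.mem_Ici.mpr le_rfl) (Set.mem_Ici.mpr hτ) hτ
    have h9 : Real.exp τ * g τ ≤ φ T1 := by
      have h10 : 0 ≤ C * Real.exp (-τ) := by positivity
      calc Real.exp τ * g τ ≤ φ τ := by rw [hφ]; dsimp only; linarith
        _ ≤ φ T1 := h8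
    calc g τ = Real.exp (-τ) * (Real.exp τ * g τ) := by
          rw [← mul_assoc, ← Real.exp_add]
          simp
      _ ≤ Real.exp (-τ) * φ T1 := mul_le_mul_of_nonneg_left h9 (Real.exp_pos _).le
      _ = φ T1 * Real.exp (-τ) := mul_comm _ _
  have hlim : Tendsto (fun τ => φ T1 * Real.exp (-τ)) atTop (nhds 0) := by
    simpa using (tendsto_exp_neg_atTop_nhds_zero.const_mul (φ T1))
  apply tendsto_of_tendsto_of_tendsto_of_le_of_le' tendsto_const_nhds hlim
  · exact eventually_atTop.mpr ⟨T1, fun τ hτ => hg0 τ hτ⟩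
  · exact eventually_atTop.mpr ⟨T1, fun τ hτ => hub τ hτ⟩

end Scalar

section Cont

variable [∀ i, Nonempty (S i)]

lemma continuous_Vfun (ω : V → ℝ) : Continuous (Vfun E A β ω) := by
  apply continuous_finset_sum
  intro i _
  apply Continuous.mul continuous_const
  have hp : ∀ s : S i, Continuous (fun x : ∀ i, S i → ℝ => payoffTo E A x i s) := by
    intro s
    apply continuous_finset_sum
    intro j _
    by_cases h : E i j
    · simp only [h, if_true]
      exact continuous_finset_sum _ fun t _ =>
        continuous_const.mul ((continuous_apply t).comp (continuous_apply j))
    · simp only [h, if_false]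
      exact continuous_const
  have hcoord : ∀ (s : S i), Continuous (fun x : ∀ i, S i → ℝ => x i s) :=
    fun s => (continuous_apply s).comp (continuous_apply i)
  have h1 : Continuous (fun x => Real.log (Z E A β x i)) := by
    apply Continuous.log
    · exact continuous_finset_sum _ fun s _ =>
        (Real.continuous_exp.comp (continuous_const.mul (hp s)))
    · exact fun x => (Z_pos E A β x i).ne'
  have h2 : Continuous (fun x : ∀ i, S i → ℝ => ∑ s : S i, x i s * payoffTo E A x i s) :=
    continuous_finset_sum _ fun s _ => (hcoord s).mul (hp s)
  have h3 : Continuous (fun x : ∀ i, S i → ℝ => vEnt β (x i)) := by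
    simp only [vEnt]
    apply Continuous.mul continuous_const
    exact continuous_finset_sum _ fun s _ =>
      (Real.continuous_mul_log.comp (hcoord s))
  exact ((continuous_const.mul h1).sub h2).sub h3

end Cont

end QRE

/-- in a weighted zero-sum population network game, every solution of
the heterogeneous mean-belief dynamics staying in `Δ` converges to the unique
QRE `μ*`, for arbitrary nonnegative initial belief variances. -/
theorem heterogeneous_dynamics_converge_to_QRE_of_weightedZeroSum
    {V : Type*} [Fintype V] [Nonempty V] [DecidableEq V]
    {S : V → Type*} [∀ i, Fintype (S i)] [∀ i, Nonempty (S i)] [∀ i, DecidableEq (S i)]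
    (E : V → V → Prop) [DecidableRel E]
    (hE_symm : ∀ i j, E i j → E j i) (hE_irrefl : ∀ i, ¬ E i i)
    (A : ∀ i j, S i → S j → ℝ)
    (ω : V → ℝ) (hω : ∀ i, 0 < ω i) (hzs : weightedZeroSum E A ω)
    (β : ℝ) (hβ : 0 < β)
    (μstar : ∀ i, S i → ℝ) (hstar : isQRE E A β μstar)
    (hstar_unique : ∀ x, isQRE E A β x → x = μstar)
    (σ2 : ∀ j, S j → ℝ) (hσ2 : ∀ j s, 0 ≤ σ2 j s)
    (μ : ℝ → ∀ i, S i → ℝ)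
    (hμΔ : ∀ τ ≥ (0 : ℝ), inProd (μ τ))
    (hode : ∀ τ ≥ (0 : ℝ),
      HasDerivAt μ (fun i s => heteroField E A β σ2 τ (μ τ) i s) τ) :
    Tendsto μ atTop (nhds μstar) := by
  classical
  obtain ⟨δ, hδ0, hδ1, hBRlb⟩ := QRE.BR_lower_bound E A β hβ
  obtain ⟨G, hG0, hGbd⟩ := QRE.exists_G E A β σ2
  have hpert_bd : ∀ τ ≥ (0:ℝ), ∀ (i : V) (s : S i),
      |(1 / 2) * Real.exp (-2 * τ) *
        ∑ j, if E i j then ∑ s' : S j, σ2 j s' * secondPartialBR E A β (μ τ) i s j s' else 0|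
      ≤ G / 2 * Real.exp (-2 * τ) := by
    intro τ hτ i s
    rw [abs_mul, abs_mul, abs_of_pos (Real.exp_pos _),
      abs_of_pos (by norm_num : (0:ℝ) < 1/2)]
    have h1 := hGbd (μ τ) (hμΔ τ hτ) i s
    have h2 := Real.exp_pos (-2 * τ)
    nlinarith
  -- eventual interior bound
  have hlow : ∀ p : Σ i, S i, ∃ T ≥ (0:ℝ), ∀ τ ≥ T, δ / 2 ≤ μ τ p.1 p.2 := by
    rintro ⟨i, s⟩
    apply QRE.scalar_lower (fun τ => μ τ i s)
      (fun τ => heteroField E A β σ2 τ (μ τ) i s) δ (G / 2) hδ0 (by positivity)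
    · intro τ hτ
      exact QRE.hasDerivAt_coord (hode τ hτ) i s
    · intro τ hτ
      have h1 := hBRlb (μ τ) (hμΔ τ hτ) i s
      have h2 := (abs_le.mp (hpert_bd τ hτ i s)).1
      simp only [heteroField]
      linarith
    · intro τ hτ
      exact (hμΔ τ hτ i).1 s
  choose T hT0' hTlow using hlow
  set T1 : ℝ := ∑ p : Σ i, S i, T p with hT1def
  have hT1p : ∀ p : Σ i, S i, T p ≤ T1 :=
    fun p => Finset.single_le_sum (fun q _ => hT0' q) (Finset.mem_univ p)
  have hT10 : (0:ℝ) ≤ T1 := Finset.sum_nonneg fun q _ => hT0' q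
  have hint : ∀ τ ≥ T1, ∀ (i : V) (s : S i), δ / 2 ≤ μ τ i s :=
    fun τ hτ i s => hTlow ⟨i, s⟩ τ (le_trans (hT1p ⟨i, s⟩) hτ)
  have hintpos : ∀ τ ≥ T1, ∀ (i : V) (s : S i), 0 < μ τ i s :=
    fun τ hτ i s => lt_of_lt_of_le (by positivity) (hint τ hτ i s)
  obtain ⟨K, hK0, hKbd⟩ := QRE.Wexpr_abs_le E A β hβ ω (δ / 2)
    (by positivity) (by linarith)
  -- derivative of V along trajectory
  have hgd : ∀ τ ≥ T1, HasDerivAt (fun t => QRE.Vfun E A β ω (μ t))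
      (QRE.Wexpr E A β ω (μ τ) (fun i s => heteroField E A β σ2 τ (μ τ) i s)) τ :=
    fun τ hτ => QRE.hasDerivAt_V E A β hβ ω (hode τ (le_trans hT10 hτ))
      (fun i s => hintpos τ hτ i s)
  have hWb : ∀ τ ≥ T1,
      QRE.Wexpr E A β ω (μ τ) (fun i s => heteroField E A β σ2 τ (μ τ) i s)
        ≤ -(QRE.Vfun E A β ω (μ τ)) + (K * (G / 2)) * Real.exp (-2 * τ) := by
    intro τ hτ
    have hτ0 : (0:ℝ) ≤ τ := le_trans hT10 hτ
    have hx := hμΔ τ hτ0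
    have hsplit : QRE.Wexpr E A β ω (μ τ) (fun i s => heteroField E A β σ2 τ (μ τ) i s)
        = QRE.Wexpr E A β ω (μ τ) (fun k t => BR E A β (μ τ) k t - μ τ k t)
          + QRE.Wexpr E A β ω (μ τ) (fun k t => (1 / 2) * Real.exp (-2 * τ) *
            ∑ j, if E k j then
              ∑ s' : S j, σ2 j s' * secondPartialBR E A β (μ τ) k t j s' else 0) := by
      rw [← QRE.Wexpr_add_right]
      rfl
    rw [hsplit]
    have h1 := QRE.W0_le E A β hβ (fun i => (hω i).le) hzs hx
      (fun i s => hintpos τ hτ i s)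
    have h2 : |QRE.Wexpr E A β ω (μ τ) (fun k t => (1 / 2) * Real.exp (-2 * τ) *
        ∑ j, if E k j then
          ∑ s' : S j, σ2 j s' * secondPartialBR E A β (μ τ) k t j s' else 0)|
        ≤ K * (G / 2 * Real.exp (-2 * τ)) := by
      apply hKbd (μ τ) _ _ hx (fun i s => hint τ hτ i s) (by positivity)
      intro j t
      exact hpert_bd τ hτ0 j t
    have h3 := (abs_le.mp h2).2
    have : K * (G / 2 * Real.exp (-2 * τ)) = K * (G / 2) * Real.exp (-2 * τ) := by ring
    linarith
  have hV0 : Tendsto (fun τ => QRE.Vfun E A β ω (μ τ)) atTop (nhds 0) := by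
    apply QRE.gronwall_decay (fun τ => QRE.Vfun E A β ω (μ τ))
      (fun τ => QRE.Wexpr E A β ω (μ τ) (fun i s => heteroField E A β σ2 τ (μ τ) i s))
      T1 (K * (G / 2)) (by positivity) hgd hWb
    intro τ hτ
    exact QRE.Vfun_nonneg E A β hβ (fun i => (hω i).le) (hμΔ τ (le_trans hT10 hτ))
  -- conclude convergence from V → 0
  rw [tendsto_nhds]
  intro U hUopen hUmem
  by_cases hK' : ({x : ∀ i, S i → ℝ | inProd x} ∩ Uᶜ) = ∅
  · refine eventually_atTop.mpr ⟨0, fun τ hτ => ?_⟩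
    by_contra hnotU
    have hmem : μ τ ∈ {x : ∀ i, S i → ℝ | inProd x} ∩ Uᶜ := ⟨hμΔ τ hτ, hnotU⟩
    rw [hK'] at hmem
    exact hmem
  · obtain ⟨z, hz⟩ := Set.nonempty_iff_ne_empty.mpr hK'
    have hKc : IsCompact ({x : ∀ i, S i → ℝ | inProd x} ∩ Uᶜ) :=
      (QRE.isCompact_Delta (S := S)).inter_right (isClosed_compl_iff.mpr hUopen)
    obtain ⟨z0, hz0mem, hz0min⟩ := hKc.exists_isMinOn ⟨z, hz⟩
      ((QRE.continuous_Vfun E A β ω).continuousOn)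
    have hz0Δ : inProd z0 := hz0mem.1
    have hz0pos : 0 < QRE.Vfun E A β ω z0 := by
      rcases eq_or_lt_of_le (QRE.Vfun_nonneg E A β hβ (fun i => (hω i).le) hz0Δ) with heq | hlt
      · exfalso
        have hq := QRE.Vfun_eq_zero_iff E A β hβ hω hz0Δ heq.symm
        have heqz := hstar_unique z0 hq
        exact hz0mem.2 (heqz ▸ hUmem)
      · exact hlt
    have hev : ∀ᶠ τ in atTop, QRE.Vfun E A β ω (μ τ) < QRE.Vfun E A β ω z0 :=
      hV0.eventually_lt_const hz0pos
    filter_upwards [hev, eventually_ge_atTop (0:ℝ)] with τ h1 h2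
    by_contra hnotU
    have hmem : μ τ ∈ {x : ∀ i, S i → ℝ | inProd x} ∩ Uᶜ := ⟨hμΔ τ h2, hnotU⟩
    have := hz0min hmem
    simp only [Set.mem_setOf_eq] at this
    exact absurd h1 (not_lt.mpr this)
end

section
/- Let Γ be a coordination population network game with star structure with root set R, and let β > 0. Define L(μ) = Σ_{j∈R} [Σ_{i : E j i} μ_jᵀ A_{ji} μ_i + v_β(μ_j) + Σ_{i : E j i} v_β(μ_i)] for μ ∈ Δ. Then along any solution μ : [0,∞) → Δ of the homogeneous belief dynamics μ'(τ) = BR(μ(τ)) − μ(τ) that remains in the interior of Δ, the function τ ↦ L(μ(τ)) is nondecreasing, and its derivative at τ is zero if and only if BR_i(μ(τ)) = μ_i(τ) for all i ∈ V, i.e. if and only if μ(τ) is a quantal response equilibrium. -/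
open Real Filter

/-!
On a star every edge has exactly one endpoint in `R` and every non-root has exactly one
neighbour, which lies in `R`; together with `A_ij = A_jiᵀ` this turns the star potential into
the potential `½ Σ_{E i j} x_iᵀ A_ij x_j + Σ_i v_β(x_i)` of the coordination game. Along
`μ' = BR(μ) - μ` its derivative is `Σ_i ⟨BR_i - μ_i, u_i(μ) - (log μ_i + 1)/β⟩`. Since
`β u_i = log BR_i + const` and `BR_i - μ_i` has total mass zero, this is
`(1/β) Σ_i Σ_s (BR_i s - μ_i s)(log BR_i s - log μ_i s)`, a sum of symmetrised KL divergences: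
nonnegative, and zero exactly when `BR_i = μ_i` for every `i`.
-/

open Finset

section Star

variable {V : Type*} [Fintype V] [DecidableEq V] {E : V → V → Prop} [DecidableRel E]
  {R : Finset V}

theorem sum_root_edges_eq_half_sum_edges (hsymm : ∀ i j, E i j → E j i)
    (hleaf : ∀ i, i ∉ R → ∀ j, E i j → j ∈ R) (hroot : ∀ j ∈ R, ∀ i, E j i → i ∉ R)
    (F : V → V → ℝ) (hF : ∀ i j, E i j → F i j = F j i) :
    ∑ j, (if j ∈ R then ∑ i, (if E j i then F j i else 0) else 0)
      = (1 / 2) * ∑ i, ∑ j, if E i j then F i j else 0 := by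
  set rootFirst := ∑ i, ∑ j, if i ∈ R ∧ E i j then F i j else 0
  have hsplit : ∀ i j, (if E i j then F i j else 0)
      = (if i ∈ R ∧ E i j then F i j else 0) + (if j ∈ R ∧ E j i then F j i else 0) := by
    intro i j
    by_cases hij : E i j
    · by_cases hi : i ∈ R
      · simp [hij, hi, hroot i hi j hij]
      · simp [hij, hi, hleaf i hi j hij, hsymm i j hij, hF i j hij]
    · have hji : ¬ E j i := fun h => hij (hsymm j i h)
      simp [hij, hji]
  have hswap : ∑ i, ∑ j, (if j ∈ R ∧ E j i then F j i else 0) = rootFirst := sum_comm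
  have hroots : ∑ j, (if j ∈ R then ∑ i, (if E j i then F j i else 0) else 0) = rootFirst := by
    refine sum_congr rfl fun j _ => ?_
    split_ifs with hj <;> simp [hj]
  rw [hroots]
  simp only [hsplit, sum_add_distrib, hswap]
  ring

theorem sum_root_closedNbhd_eq_sum (hsymm : ∀ i j, E i j → E j i)
    (hleaf : ∀ i, i ∉ R → (∃! j, E i j) ∧ ∀ j, E i j → j ∈ R)
    (hroot : ∀ j ∈ R, ∀ i, E j i → i ∉ R) (e : V → ℝ) :
    ∑ j, (if j ∈ R then e j + ∑ i, (if E j i then e i else 0) else 0) = ∑ i, e i := by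
  have hroot_count : ∀ i, ∑ j, (if j ∈ R ∧ E j i then e i else 0) = if i ∈ R then 0 else e i := by
    intro i
    split_ifs with hi
    · exact sum_eq_zero fun j _ => if_neg fun h => hroot j h.1 i h.2 hi
    · obtain ⟨⟨j₀, hj₀, huniq⟩, hnbr⟩ := hleaf i hi
      have hcenter : ∀ j, (j ∈ R ∧ E j i) ↔ j = j₀ := fun j =>
        ⟨fun h => huniq j (hsymm j i h.2), fun h => h ▸ ⟨hnbr j₀ hj₀, hsymm i j₀ hj₀⟩⟩
      simp [hcenter]
  calc ∑ j, (if j ∈ R then e j + ∑ i, (if E j i then e i else 0) else 0)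
      = ∑ j, ((if j ∈ R then e j else 0) + ∑ i, if j ∈ R ∧ E j i then e i else 0) := by
        refine sum_congr rfl fun j _ => ?_
        split_ifs with hj <;> simp [hj]
    _ = ∑ i, ((if i ∈ R then e i else 0) + if i ∈ R then 0 else e i) := by
        rw [sum_add_distrib, sum_comm (f := fun j i => if j ∈ R ∧ E j i then e i else 0),
          ← sum_add_distrib]
        simp only [hroot_count]
    _ = ∑ i, e i := sum_congr rfl fun i _ => by split_ifs <;> simp

end Star

section Jeffreys

variable {ι : Type*} [Fintype ι]

theorem sub_mul_log_sub_log_nonneg {a b : ℝ} (ha : 0 < a) (hb : 0 < b) :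
    0 ≤ (a - b) * (Real.log a - Real.log b) := by
  rcases le_total b a with hba | hab
  · exact mul_nonneg (sub_nonneg.2 hba) (sub_nonneg.2 (Real.log_le_log hb hba))
  · exact mul_nonneg_of_nonpos_of_nonpos (sub_nonpos.2 hab)
      (sub_nonpos.2 (Real.log_le_log ha hab))

theorem sub_mul_log_sub_log_eq_zero_iff {a b : ℝ} (ha : 0 < a) (hb : 0 < b) :
    (a - b) * (Real.log a - Real.log b) = 0 ↔ a = b := by
  rw [mul_eq_zero, sub_eq_zero, sub_eq_zero]
  exact or_iff_left_of_imp fun h => Real.log_injOn_pos ha hb h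

/-- The symmetrised Kullback–Leibler divergence `KL(p‖q) + KL(q‖p)`. -/
noncomputable def jeffreysDiv (p q : ι → ℝ) : ℝ :=
  ∑ s, (p s - q s) * (Real.log (p s) - Real.log (q s))

theorem jeffreysDiv_nonneg {p q : ι → ℝ} (hp : ∀ s, 0 < p s) (hq : ∀ s, 0 < q s) :
    0 ≤ jeffreysDiv p q :=
  sum_nonneg fun s _ => sub_mul_log_sub_log_nonneg (hp s) (hq s)

theorem jeffreysDiv_eq_zero_iff {p q : ι → ℝ} (hp : ∀ s, 0 < p s) (hq : ∀ s, 0 < q s) :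
    jeffreysDiv p q = 0 ↔ p = q := by
  rw [jeffreysDiv, Fintype.sum_eq_zero_iff_of_nonneg
    fun s => sub_mul_log_sub_log_nonneg (hp s) (hq s), funext_iff, funext_iff]
  exact forall_congr' fun s => sub_mul_log_sub_log_eq_zero_iff (hp s) (hq s)

end Jeffreys

theorem hasDerivAt_vEnt {ι : Type*} [Fintype ι] (β : ℝ) {p : ℝ → ι → ℝ} {q : ι → ℝ} {τ : ℝ}
    (hp : HasDerivAt p q τ) (hpos : ∀ s, p τ s ≠ 0) :
    HasDerivAt (fun t => vEnt β (p t)) (-(1 / β) * ∑ s, q s * (Real.log (p τ s) + 1)) τ := by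
  refine (HasDerivAt.fun_sum fun s _ => ?_).const_mul (-(1 / β))
  have hps := hasDerivAt_pi.1 hp s
  exact (hps.mul (hps.log (hpos s))).congr_deriv (by field_simp [hpos s])

section Game

variable {V : Type*} {S : V → Type*} [∀ i, Fintype (S i)]

theorem bilin_swap {E : V → V → Prop} {A : ∀ i j, S i → S j → ℝ}
    (hcoord : ∀ i j, E i j → ∀ (s : S i) (s' : S j), A i j s s' = A j i s' s)
    {i j : V} (hij : E i j) (x y : ∀ i, S i → ℝ) : bilin A x y i j = bilin A y x j i := by
  rw [bilin, bilin, sum_comm]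
  exact sum_congr rfl fun s' _ => sum_congr rfl fun s _ => by rw [hcoord i j hij]; ring

theorem hasDerivAt_bilin {A : ∀ i j, S i → S j → ℝ} {μ : ℝ → ∀ i, S i → ℝ}
    {D : ∀ i, S i → ℝ} {τ : ℝ} (hμ : HasDerivAt μ D τ) (i j : V) :
    HasDerivAt (fun t => bilin A (μ t) (μ t) i j)
      (bilin A D (μ τ) i j + bilin A (μ τ) D i j) τ := by
  have hcomp : ∀ k s, HasDerivAt (fun t => μ t k s) (D k s) τ :=
    fun k s => hasDerivAt_pi.1 (hasDerivAt_pi.1 hμ k) s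
  simp only [bilin, ← sum_add_distrib]
  exact HasDerivAt.fun_sum fun s _ => HasDerivAt.fun_sum fun s' _ =>
    (((hcomp i s).mul_const _).mul (hcomp j s')).congr_deriv (by ring)

variable [Fintype V] (E : V → V → Prop) [DecidableRel E] (A : ∀ i j, S i → S j → ℝ) (β : ℝ)

noncomputable def coordPotential (x : ∀ i, S i → ℝ) : ℝ :=
  (1 / 2) * ∑ i, ∑ j, (if E i j then bilin A x x i j else 0) + ∑ i, vEnt β (x i)

variable {E A β}

theorem starPotential_eq_coordPotential [DecidableEq V] {R : Finset V}
    (hsymm : ∀ i j, E i j → E j i)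
    (hleaf : ∀ i, i ∉ R → (∃! j, E i j) ∧ ∀ j, E i j → j ∈ R)
    (hroot : ∀ j ∈ R, ∀ i, E j i → i ∉ R)
    (hcoord : ∀ i j, E i j → ∀ (s : S i) (s' : S j), A i j s s' = A j i s' s)
    (x : ∀ i, S i → ℝ) :
    (∑ j, if j ∈ R then
        ((∑ i, if E j i then bilin A x x j i else 0)
          + vEnt β (x j) + ∑ i, if E j i then vEnt β (x i) else 0)
      else 0) = coordPotential E A β x := by
  rw [coordPotential,
    ← sum_root_edges_eq_half_sum_edges hsymm (fun i hi => (hleaf i hi).2) hroot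
      (fun i j => bilin A x x i j) fun i j hij => bilin_swap hcoord hij x x,
    ← sum_root_closedNbhd_eq_sum hsymm hleaf hroot fun i => vEnt β (x i), ← sum_add_distrib]
  refine sum_congr rfl fun j _ => ?_
  split_ifs <;> simp [add_assoc]

theorem sum_edges_bilin_eq_sum_mul_payoffTo (x y : ∀ i, S i → ℝ) :
    ∑ i, ∑ j, (if E i j then bilin A y x i j else 0)
      = ∑ i, ∑ s, y i s * payoffTo E A x i s := by
  refine sum_congr rfl fun i _ => ?_
  simp only [payoffTo, mul_sum, mul_ite, mul_zero, bilin, mul_assoc]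
  rw [sum_comm (s := univ) (t := univ)]
  exact sum_congr rfl fun j _ => by split_ifs <;> simp

theorem hasDerivAt_coordPotential (hsymm : ∀ i j, E i j → E j i)
    (hcoord : ∀ i j, E i j → ∀ (s : S i) (s' : S j), A i j s s' = A j i s' s)
    {μ : ℝ → ∀ i, S i → ℝ} {D : ∀ i, S i → ℝ} {τ : ℝ} (hμ : HasDerivAt μ D τ)
    (hpos : ∀ i s, μ τ i s ≠ 0) :
    HasDerivAt (fun t => coordPotential E A β (μ t))
      (∑ i, ∑ s, D i s * (payoffTo E A (μ τ) i s - (1 / β) * (Real.log (μ τ i s) + 1))) τ := by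
  have hquad : HasDerivAt (fun t => ∑ i, ∑ j, if E i j then bilin A (μ t) (μ t) i j else 0)
      (∑ i, ∑ j, ((if E i j then bilin A D (μ τ) i j else 0)
        + if E i j then bilin A (μ τ) D i j else 0)) τ :=
    HasDerivAt.fun_sum fun i _ => HasDerivAt.fun_sum fun j _ => by
      split_ifs
      · simpa using hasDerivAt_bilin hμ i j
      · simpa using hasDerivAt_const τ (0 : ℝ)
  have hhalves : ∑ i, ∑ j, (if E i j then bilin A (μ τ) D i j else 0)
      = ∑ i, ∑ j, (if E i j then bilin A D (μ τ) i j else 0) := by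
    rw [sum_comm]
    refine sum_congr rfl fun i _ => sum_congr rfl fun j _ => ?_
    by_cases hji : E j i
    · rw [if_pos hji, if_pos (hsymm j i hji), bilin_swap hcoord hji]
    · rw [if_neg hji, if_neg fun hij => hji (hsymm i j hij)]
  have hent := HasDerivAt.fun_sum fun i (_ : i ∈ univ) =>
    hasDerivAt_vEnt β (hasDerivAt_pi.1 hμ i) (hpos i)
  refine ((hquad.const_mul (1 / 2)).add hent).congr_deriv ?_
  rw [sum_congr rfl fun i _ => sum_add_distrib, sum_add_distrib, hhalves,
    sum_edges_bilin_eq_sum_mul_payoffTo, ← two_mul, ← mul_assoc, one_div_mul_cancel two_ne_zero,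
    one_mul, ← sum_add_distrib]
  refine sum_congr rfl fun i _ => ?_
  rw [mul_sum, ← sum_add_distrib]
  exact sum_congr rfl fun s _ => by ring

end Game

section Logit

variable {V : Type*} [Fintype V] {S : V → Type*} [∀ i, Fintype (S i)] [∀ i, Nonempty (S i)]
  {E : V → V → Prop} [DecidableRel E] {A : ∀ i j, S i → S j → ℝ} {β : ℝ}

theorem sum_exp_payoffTo_pos (x : ∀ i, S i → ℝ) (i : V) :
    0 < ∑ s, Real.exp (β * payoffTo E A x i s) :=
  sum_pos (fun _ _ => Real.exp_pos _) univ_nonempty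

theorem BR_pos (x : ∀ i, S i → ℝ) (i : V) (s : S i) : 0 < BR E A β x i s :=
  div_pos (Real.exp_pos _) (sum_exp_payoffTo_pos x i)

theorem sum_BR (x : ∀ i, S i → ℝ) (i : V) : ∑ s, BR E A β x i s = 1 := by
  unfold BR
  rw [← sum_div, div_self (sum_exp_payoffTo_pos x i).ne']

theorem payoffTo_eq_log_BR (hβ : β ≠ 0) (x : ∀ i, S i → ℝ) (i : V) (s : S i) :
    payoffTo E A x i s
      = (Real.log (BR E A β x i s) + Real.log (∑ s', Real.exp (β * payoffTo E A x i s'))) / β := by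
  unfold BR
  rw [Real.log_div (Real.exp_ne_zero _) (sum_exp_payoffTo_pos x i).ne', Real.log_exp]
  field_simp
  ring

theorem sum_sub_BR_mul_perturbed_payoff (hβ : β ≠ 0) (x : ∀ i, S i → ℝ) (i : V)
    (hx : ∑ s, x i s = 1) :
    ∑ s, (BR E A β x i s - x i s) * (payoffTo E A x i s - (1 / β) * (Real.log (x i s) + 1))
      = (1 / β) * jeffreysDiv (BR E A β x i) (x i) := by
  set Z := ∑ s, Real.exp (β * payoffTo E A x i s)
  have hmass : ∑ s, (BR E A β x i s - x i s) = 0 := by rw [sum_sub_distrib, sum_BR, hx, sub_self]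
  calc ∑ s, (BR E A β x i s - x i s) * (payoffTo E A x i s - (1 / β) * (Real.log (x i s) + 1))
      = ∑ s, ((1 / β) * ((BR E A β x i s - x i s)
            * (Real.log (BR E A β x i s) - Real.log (x i s)))
          + (1 / β) * (Real.log Z - 1) * (BR E A β x i s - x i s)) :=
        sum_congr rfl fun s _ => by rw [payoffTo_eq_log_BR hβ]; ring
    _ = (1 / β) * jeffreysDiv (BR E A β x i) (x i) := by
        rw [sum_add_distrib, ← mul_sum, ← mul_sum, hmass, mul_zero, add_zero, jeffreysDiv]

theorem hasDerivAt_coordPotential_along_logitFlow (hsymm : ∀ i j, E i j → E j i)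
    (hcoord : ∀ i j, E i j → ∀ (s : S i) (s' : S j), A i j s s' = A j i s' s) (hβ : β ≠ 0)
    {μ : ℝ → ∀ i, S i → ℝ} {τ : ℝ} (hΔ : inProd (μ τ)) (hpos : ∀ i s, 0 < μ τ i s)
    (hode : HasDerivAt μ (fun i s => BR E A β (μ τ) i s - μ τ i s) τ) :
    HasDerivAt (fun t => coordPotential E A β (μ t))
      ((1 / β) * ∑ i, jeffreysDiv (BR E A β (μ τ) i) (μ τ i)) τ := by
  refine (hasDerivAt_coordPotential hsymm hcoord hode fun i s => (hpos i s).ne').congr_deriv ?_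
  rw [mul_sum]
  exact sum_congr rfl fun i _ => sum_sub_BR_mul_perturbed_payoff hβ (μ τ) i (hΔ i).2

end Logit

theorem coordination_star_potential_nondecreasing_general
    {V : Type*} [Fintype V] [DecidableEq V]
    {S : V → Type*} [∀ i, Fintype (S i)] [∀ i, Nonempty (S i)]
    (E : V → V → Prop) [DecidableRel E]
    (hE_symm : ∀ i j, E i j → E j i)
    (A : ∀ i j, S i → S j → ℝ)
    (hcoord : ∀ i j, E i j → ∀ (s : S i) (s' : S j), A i j s s' = A j i s' s)
    (R : Finset V)
    (hleaf : ∀ i, i ∉ R → (∃! j, E i j) ∧ ∀ j, E i j → j ∈ R)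
    (hroot : ∀ j ∈ R, ∀ i, E j i → i ∉ R)
    (β : ℝ) (hβ : 0 < β)
    (μ : ℝ → ∀ i, S i → ℝ)
    (hμΔ : ∀ τ ≥ (0 : ℝ), inProd (μ τ) ∧ ∀ i s, 0 < μ τ i s)
    (hode : ∀ τ ≥ (0 : ℝ),
      HasDerivAt μ (fun i s => BR E A β (μ τ) i s - μ τ i s) τ) :
    MonotoneOn
      (fun t => ∑ j, if j ∈ R then
          ((∑ i, if E j i then bilin A (μ t) (μ t) j i else 0)
            + vEnt β (μ t j) + ∑ i, if E j i then vEnt β (μ t i) else 0)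
        else 0)
      (Set.Ici (0 : ℝ)) ∧
    ∀ τ ≥ (0 : ℝ),
      (deriv
        (fun t => ∑ j, if j ∈ R then
            ((∑ i, if E j i then bilin A (μ t) (μ t) j i else 0)
              + vEnt β (μ t j) + ∑ i, if E j i then vEnt β (μ t i) else 0)
          else 0) τ = 0
        ↔ ∀ i, BR E A β (μ τ) i = μ τ i) := by
  simp only [starPotential_eq_coordPotential hE_symm hleaf hroot hcoord]
  have hderiv : ∀ τ ≥ (0 : ℝ), HasDerivAt (fun t => coordPotential E A β (μ t))
      ((1 / β) * ∑ i, jeffreysDiv (BR E A β (μ τ) i) (μ τ i)) τ := fun τ hτ =>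
    hasDerivAt_coordPotential_along_logitFlow hE_symm hcoord hβ.ne' (hμΔ τ hτ).1 (hμΔ τ hτ).2
      (hode τ hτ)
  have hdiv_nonneg : ∀ τ ≥ (0 : ℝ), ∀ i, 0 ≤ jeffreysDiv (BR E A β (μ τ) i) (μ τ i) :=
    fun τ hτ i => jeffreysDiv_nonneg (BR_pos _ i) ((hμΔ τ hτ).2 i)
  refine ⟨monotoneOn_of_hasDerivWithinAt_nonneg (convex_Ici 0)
    (f' := fun τ => (1 / β) * ∑ i, jeffreysDiv (BR E A β (μ τ) i) (μ τ i))
    (fun τ hτ => (hderiv τ hτ).continuousAt.continuousWithinAt) (fun τ hτ => ?_)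
    (fun τ hτ => ?_), fun τ hτ => ?_⟩
  · rw [interior_Ici] at hτ
    exact (hderiv τ hτ.le).hasDerivWithinAt
  · rw [interior_Ici] at hτ
    exact mul_nonneg (by positivity) (sum_nonneg fun i _ => hdiv_nonneg τ hτ.le i)
  · rw [(hderiv τ hτ).deriv, mul_eq_zero, or_iff_right (by positivity),
      Fintype.sum_eq_zero_iff_of_nonneg (hdiv_nonneg τ hτ), funext_iff]
    exact forall_congr' fun i => jeffreysDiv_eq_zero_iff (BR_pos _ i) ((hμΔ τ hτ).2 i)

/-- in a coordination network game with star structure and root set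
`R`, the potential `L(μ) = Σ_(j∈R) (μ_jᵀ (Σ_i A_(ji) μ_i) + v_β(μ_j) + Σ_i v_β(μ_i))`
is nondecreasing along interior solutions of the homogeneous belief dynamics, with
stationary derivative exactly at QRE points. -/
theorem coordination_star_potential_nondecreasing
    {V : Type*} [Fintype V] [Nonempty V] [DecidableEq V]
    {S : V → Type*} [∀ i, Fintype (S i)] [∀ i, Nonempty (S i)] [∀ i, DecidableEq (S i)]
    (E : V → V → Prop) [DecidableRel E]
    (hE_symm : ∀ i j, E i j → E j i) (hE_irrefl : ∀ i, ¬ E i i)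
    (A : ∀ i j, S i → S j → ℝ)
    (hcoord : ∀ i j, E i j → ∀ (s : S i) (s' : S j), A i j s s' = A j i s' s)
    (R : Finset V)
    (hleaf : ∀ i, i ∉ R → (∃! j, E i j) ∧ ∀ j, E i j → j ∈ R)
    (hroot : ∀ j ∈ R, ∀ i, E j i → i ∉ R)
    (β : ℝ) (hβ : 0 < β)
    (μ : ℝ → ∀ i, S i → ℝ)
    (hμΔ : ∀ τ ≥ (0 : ℝ), inProd (μ τ) ∧ ∀ i s, 0 < μ τ i s)
    (hode : ∀ τ ≥ (0 : ℝ),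
      HasDerivAt μ (fun i s => BR E A β (μ τ) i s - μ τ i s) τ) :
    MonotoneOn
      (fun t => ∑ j, if j ∈ R then
          ((∑ i, if E j i then bilin A (μ t) (μ t) j i else 0)
            + vEnt β (μ t j) + ∑ i, if E j i then vEnt β (μ t i) else 0)
        else 0)
      (Set.Ici (0 : ℝ)) ∧
    ∀ τ ≥ (0 : ℝ),
      (deriv
        (fun t => ∑ j, if j ∈ R then
            ((∑ i, if E j i then bilin A (μ t) (μ t) j i else 0)
              + vEnt β (μ t j) + ∑ i, if E j i then vEnt β (μ t i) else 0)
          else 0) τ = 0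
        ↔ ∀ i, BR E A β (μ τ) i = μ τ i) :=
  coordination_star_potential_nondecreasing_general E hE_symm A hcoord R hleaf hroot β hβ μ hμΔ hode
end
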